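/- arXiv:2310.07404 — 6 statements merged into one kernel-verified Lean document; each statement's English description precedes it below -/
import Mathlib

section
/- Let N be a positive integer, p a prime, and A an N × N matrix with entries in 𝔽_p. Then there exists a positive integer g with g ≤ p^N − 1 such that A^g is diagonalizable over 𝔽_p and every eigenvalue of A^g is 0 or 1; equivalently, there exists a positive integer g ≤ p^N − 1 such that A^g · (A^g − I) = 0. -/
/-!
The powers `a, a², a³, …` of an element of a finite monoid eventually become periodic, and every
long enough stretch of the periodic part contains an idempotent; pigeonhole on `|S| + 1`
consecutive powers lying in a set `S` finds one among the first `|S|` powers. In a nontrivial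
finite ring the positive powers of `a` miss `1` (if `a` is nilpotent) or `0` (otherwise), which
gives an idempotent `a ^ g` with `1 ≤ g ≤ |R| - 1`. Applied to the root of the characteristic
polynomial `χ` in `R[X] ⧸ (χ)`, a ring with `|R| ^ N` elements that maps to the matrices by
`X ↦ A` (Cayley–Hamilton), this gives the idempotent power `A ^ g` with `g ≤ |R| ^ N - 1`.
-/

open Polynomial

lemma pow_add_mul_eq_pow_of_pow_add_eq {M : Type*} [Monoid M] {a : M} {m ℓ : ℕ}
    (h : a ^ (m + ℓ) = a ^ m) {k : ℕ} (hk : m ≤ k) (t : ℕ) : a ^ (k + ℓ * t) = a ^ k := by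
  induction t with
  | zero => simp
  | succ t ih =>
    obtain ⟨j, rfl⟩ := Nat.exists_eq_add_of_le hk
    calc a ^ (m + j + ℓ * (t + 1)) = a ^ (m + ℓ) * a ^ (j + ℓ * t) := by
          rw [← pow_add]; ring_nf
      _ = a ^ (m + j) := by rw [h, ← pow_add, ← add_assoc, ih]

theorem exists_isIdempotentElem_pow_of_pow_mem {M : Type*} [Monoid M] (a : M) (S : Finset M)
    (hS : ∀ k, a ^ (k + 1) ∈ S) : ∃ g, 0 < g ∧ g ≤ S.card ∧ IsIdempotentElem (a ^ g) := by
  obtain ⟨i, j, hij, hj, hpow⟩ : ∃ i j, i < j ∧ j ≤ S.card ∧ a ^ (i + 1) = a ^ (j + 1) := by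
    obtain ⟨x, hx, y, hy, hxy, hfxy⟩ := Finset.exists_ne_map_eq_of_card_lt_of_maps_to
      (s := Finset.range (S.card + 1)) (by simp) (f := fun k => a ^ (k + 1)) (fun k _ => hS k)
    rw [Finset.mem_range] at hx hy
    rcases hxy.lt_or_gt with h | h
    · exact ⟨x, y, h, by omega, hfxy⟩
    · exact ⟨y, x, h, by omega, hfxy.symm⟩
  set ℓ := j - i
  have hℓ : 0 < ℓ := by omega
  have hcycle : a ^ (i + 1 + ℓ) = a ^ (i + 1) := by rw [hpow]; congr 1; omega
  -- `g` is the multiple of the period `ℓ` among `i + 1, …, i + ℓ`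
  refine ⟨ℓ * (i / ℓ + 1), by positivity, ?_, ?_⟩
  · have := Nat.mul_div_le i ℓ
    rw [mul_add, mul_one]
    omega
  · rw [IsIdempotentElem, ← pow_add]
    exact pow_add_mul_eq_pow_of_pow_add_eq hcycle (Nat.lt_mul_div_succ i hℓ) _

theorem exists_isIdempotentElem_pow_le_card_sub_one {M : Type*} [MonoidWithZero M] [Nontrivial M]
    [Finite M] (a : M) : ∃ g, 0 < g ∧ g ≤ Nat.card M - 1 ∧ IsIdempotentElem (a ^ g) := by
  classical
  have := Fintype.ofFinite M
  obtain ⟨b, hb⟩ : ∃ b : M, ∀ k, a ^ (k + 1) ≠ b := by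
    by_cases ha : IsNilpotent a
    · exact ⟨1, fun k hk => not_isNilpotent_one (R := M) (hk ▸ ha.pow_succ k)⟩
    · exact ⟨0, fun k hk => ha ⟨k + 1, hk⟩⟩
  obtain ⟨g, hg0, hgS, hg⟩ := exists_isIdempotentElem_pow_of_pow_mem a (Finset.univ.erase b)
    (fun k => Finset.mem_erase.2 ⟨hb k, Finset.mem_univ _⟩)
  refine ⟨g, hg0, ?_, hg⟩
  rwa [Finset.card_erase_of_mem (Finset.mem_univ b), Finset.card_univ,
    ← Nat.card_eq_fintype_card] at hgS

theorem Polynomial.Monic.natCard_adjoinRoot {R : Type*} [CommRing R] {f : R[X]} (hf : f.Monic) :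
    Nat.card (AdjoinRoot f) = Nat.card R ^ f.natDegree := by
  rw [Nat.card_congr (AdjoinRoot.powerBasis' hf).basis.equivFun.toEquiv, Nat.card_fun,
    Nat.card_fin, AdjoinRoot.powerBasis'_dim]

theorem Matrix.exists_isIdempotentElem_pow {n R : Type*} [Fintype n] [DecidableEq n] [Nonempty n]
    [CommRing R] [Nontrivial R] [Finite R] (A : Matrix n n R) :
    ∃ g, 0 < g ∧ g ≤ Nat.card R ^ Fintype.card n - 1 ∧ IsIdempotentElem (A ^ g) := by
  set χ := A.charpoly
  have hcard : Nat.card (AdjoinRoot χ) = Nat.card R ^ Fintype.card n := by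
    rw [A.charpoly_monic.natCard_adjoinRoot, A.charpoly_natDegree_eq_dim]
  have hcard_gt_one : 1 < Nat.card (AdjoinRoot χ) :=
    hcard ▸ Nat.one_lt_pow Fintype.card_ne_zero Finite.one_lt_card
  have : Finite (AdjoinRoot χ) := Nat.finite_of_card_ne_zero (by omega)
  have : Nontrivial (AdjoinRoot χ) := Finite.one_lt_card_iff_nontrivial.1 hcard_gt_one
  obtain ⟨g, hg0, hgcard, hg⟩ := exists_isIdempotentElem_pow_le_card_sub_one (AdjoinRoot.root χ)
  refine ⟨g, hg0, hcard ▸ hgcard, ?_⟩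
  -- `AdjoinRoot.lift` needs a commutative target, so lift `aeval A` through the quotient directly
  let evalA : AdjoinRoot χ →+* Matrix n n R := Ideal.Quotient.lift _ (aeval A).toRingHom
    fun f hf => by
      obtain ⟨c, rfl⟩ := Ideal.mem_span_singleton'.1 hf
      simp [χ, A.aeval_self_charpoly]
  have hroot : evalA (AdjoinRoot.root χ) = A :=
    (Ideal.Quotient.lift_mk _ _ _).trans (aeval_X A)
  simpa [hroot] using hg.map evalA

/-- For any `N × N` matrix `A` over `𝔽_p`, there is a positive integer
`g ≤ p^N - 1` such that `A^g` is diagonalizable with eigenvalues in `{0, 1}`,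
equivalently `A^g * (A^g - 1) = 0`. -/
theorem stmt2 (N p : ℕ) (hN : 1 ≤ N) (hp : p.Prime)
    (A : Matrix (Fin N) (Fin N) (ZMod p)) :
    ∃ g : ℕ, 0 < g ∧ g ≤ p ^ N - 1 ∧ A ^ g * (A ^ g - 1) = 0 := by
  have : Fact p.Prime := ⟨hp⟩
  have : Nonempty (Fin N) := ⟨⟨0, hN⟩⟩
  obtain ⟨g, hg0, hgp, hg⟩ := A.exists_isIdempotentElem_pow
  refine ⟨g, hg0, by simpa using hgp, ?_⟩
  rw [mul_sub, mul_one, hg.eq, sub_self]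
end

section
/- For every integer N ≥ 1 there exists a constant C(N) > 0 such that for every polynomial endomorphism F : ℤ^N → ℤ^N over ℤ and every F-periodic point P ∈ ℤ^N, the primitive period of P is at most C(N). -/
/-!
Reduce modulo `4`. The orbit of `P` modulo `4` has a period `n₀ ≤ 4 ^ N`, so `G = F^[n₀]` fixes
`P` modulo `4`, and a first-order Taylor expansion shows that near `P` (`4`-adically) `G` acts on
differences of points through a Jacobian matrix `B`, modulo `4`. For `c = |M_N(ℤ/4)|!` the matrix
`B ^ c` is idempotent modulo `4`. If `P` had prime period `ℓ` under a map `T` with such an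
idempotent Jacobian `E`, the consecutive differences `T^[j+1] P - T^[j] P`, divided by their gcd,
would satisfy `δⱼ₊₁ ≡ E δⱼ`, hence `δ₀ ≡ E^ℓ δ₀ = E δ₀` and all `δⱼ ≡ δ₀ (mod 4)`; summing around
the cycle gives `ℓ δ₀ ≡ 0 (mod 4)` with `δ₀` not even, which no prime `ℓ` allows. So `G^[c]` fixes
`P`, and the period of `P` divides `n₀ c ≤ 4 ^ N c`.
-/

open MvPolynomial Function Matrix Finset
open scoped Nat

namespace MvPolynomial

variable {σ R : Type*} [CommRing R]

theorem dvd_eval_sub_eval {q : R} {x y : σ → R} (h : ∀ i, q ∣ x i - y i) (p : MvPolynomial σ R) :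
    q ∣ eval x p - eval y p := by
  rw [← Ideal.mem_span_singleton, ← Ideal.Quotient.eq, eval₂_comp, eval₂_comp]
  congr 1
  funext i
  exact Ideal.Quotient.eq.mpr (Ideal.mem_span_singleton.mpr (h i))

theorem mul_dvd_eval_sub_eval_sub_sum_pderiv [Fintype σ] {q g : R} {a x y : σ → R}
    (hx : ∀ i, q ∣ x i - a i) (hy : ∀ i, q ∣ y i - a i) (hxy : ∀ i, g ∣ x i - y i)
    (p : MvPolynomial σ R) :
    q * g ∣ eval x p - eval y p - ∑ j, eval a (pderiv j p) * (x j - y j) := by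
  induction p using MvPolynomial.induction_on with
  | C r => simp
  | add p₁ p₂ h₁ h₂ =>
    convert dvd_add h₁ h₂ using 1
    simp only [map_add, add_mul, Finset.sum_add_distrib]
    ring
  | mul_X p i hp =>
    set L := ∑ j, eval a (pderiv j p) * (x j - y j)
    have hL : g ∣ L := Finset.dvd_sum fun j _ => (hxy j).mul_left _
    have hpy : q ∣ eval y p - eval a p := dvd_eval_sub_eval hy p
    have expand : ∑ j, eval a (pderiv j (p * X i)) * (x j - y j) =
        eval a p * (x i - y i) + a i * L := by
      classical
      simp [pderiv_X, Pi.single_apply, add_mul, Finset.sum_add_distrib, L, Finset.mul_sum,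
        apply_ite (eval a), ite_mul, mul_assoc]
    have split :
        eval x (p * X i) - eval y (p * X i) - ∑ j, eval a (pderiv j (p * X i)) * (x j - y j) =
          x i * (eval x p - eval y p - L) + (x i - a i) * L +
            (eval y p - eval a p) * (x i - y i) := by
      rw [expand]; simp only [map_mul, eval_X]; ring
    rw [split]
    exact dvd_add (dvd_add (hp.mul_left _) (mul_dvd_mul (hx i) hL)) (mul_dvd_mul hpy (hxy i))

end MvPolynomial

theorem isIdempotentElem_pow_factorial_card {M : Type*} [Monoid M] [Fintype M] (x : M) :
    IsIdempotentElem (x ^ (Fintype.card M)!) := by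
  obtain ⟨a, b, hne, hab⟩ := Fintype.exists_ne_map_eq_of_card_lt
    (fun n : Fin (Fintype.card M + 1) => x ^ (n : ℕ)) (by simp)
  wlog hlt : (a : ℕ) < b generalizing a b
  · exact this b a hne.symm hab.symm (lt_of_le_of_ne (not_lt.mp hlt) (Fin.val_ne_of_ne hne.symm))
  have ha : (a : ℕ) ≤ (Fintype.card M)! := (Nat.lt_succ_iff.mp a.2).trans (Nat.self_le_factorial _)
  -- Past the exponent `a`, the powers of `x` repeat with period `b - a`.
  have hper : IsPeriodicPt (· * x) (b - a) (x ^ (Fintype.card M)!) := by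
    change (· * x)^[b - a] _ = _
    rw [mul_right_iterate]
    calc x ^ (Fintype.card M)! * x ^ (b - a : ℕ)
        = x ^ ((Fintype.card M)! - a) * x ^ (a + (b - a) : ℕ) := by
          rw [← pow_add, ← pow_add]; congr 1; omega
      _ = x ^ ((Fintype.card M)! - a) * x ^ (a : ℕ) := by rw [Nat.add_sub_cancel' hlt.le, hab]
      _ = x ^ (Fintype.card M)! := by rw [← pow_add, Nat.sub_add_cancel ha]
  have := isPeriodicPt_factorial_card_of_mem_periodicPts (mk_mem_periodicPts (by omega) hper)
  rwa [IsPeriodicPt, IsFixedPt, mul_right_iterate] at this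

theorem Int.dvd_of_sq_dvd_prime_mul {p ℓ : ℕ} (hp : p.Prime) (hℓ : ℓ.Prime) {u : ℤ}
    (h : (p : ℤ) ^ 2 ∣ ℓ * u) : (p : ℤ) ∣ u := by
  by_contra hu
  have hcop : IsCoprime ((p : ℤ) ^ 2) u :=
    ((Nat.prime_iff_prime_int.mp hp).coprime_iff_not_dvd.mpr hu).pow_left
  have hpℓ : p ^ 2 ∣ ℓ := by exact_mod_cast hcop.dvd_of_dvd_mul_right h
  rcases hℓ.eq_one_or_self_of_dvd _ hpℓ with h1 | h1
  · exact (Nat.one_lt_pow two_ne_zero hp.one_lt).ne' h1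
  · rw [← h1] at hℓ
    exact absurd hℓ.eq_one_of_pow (by norm_num)

section Linearization

variable {ι R : Type*} [Fintype ι] [CommRing R]

/-- `A` is a Jacobian matrix of `T` at `a` modulo `q`, in the sense of a first-order Taylor
expansion valid on the residue class of `a`. -/
def HasJacobianMod (T : (ι → R) → ι → R) (q : R) (a : ι → R) (A : Matrix ι ι R) : Prop :=
  ∀ (g : R) (x y : ι → R), (∀ i, q ∣ x i - a i) → (∀ i, q ∣ y i - a i) →
    (∀ i, g ∣ x i - y i) → ∀ i, q * g ∣ T x i - T y i - (A *ᵥ (x - y)) i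

theorem hasJacobianMod_id [DecidableEq ι] (q : R) (a : ι → R) : HasJacobianMod id q a 1 :=
  fun _ _ _ _ _ _ _ => by simp

theorem hasJacobianMod_eval (f : ι → MvPolynomial ι R) (q : R) (a : ι → R) :
    HasJacobianMod (fun x i => eval x (f i)) q a (Matrix.of fun i j => eval a (pderiv j (f i))) :=
  fun _ _ _ hx hy hxy i => by
    simpa [mulVec, dotProduct] using mul_dvd_eval_sub_eval_sub_sum_pderiv hx hy hxy (f i)

namespace HasJacobianMod

variable {T U : (ι → R) → ι → R} {q : R} {a b : ι → R} {A B : Matrix ι ι R}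

theorem dvd_sub (hT : HasJacobianMod T q a A) {g : R} {x y : ι → R} (hx : ∀ i, q ∣ x i - a i)
    (hy : ∀ i, q ∣ y i - a i) (hxy : ∀ i, g ∣ x i - y i) (i : ι) : g ∣ T x i - T y i := by
  have hA : g ∣ (A *ᵥ (x - y)) i := Finset.dvd_sum fun j _ => (hxy j).mul_left _
  simpa using dvd_add ((dvd_mul_left g q).trans (hT g x y hx hy hxy i)) hA

theorem of_dvd_sub (hT : HasJacobianMod T q a A) (hab : ∀ i, q ∣ b i - a i) :
    HasJacobianMod T q b A := by
  refine fun g x y hx hy => hT g x y (fun i => ?_) (fun i => ?_)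
  · simpa using dvd_add (hx i) (hab i)
  · simpa using dvd_add (hy i) (hab i)

theorem comp (hU : HasJacobianMod U q (T a) B) (hT : HasJacobianMod T q a A) :
    HasJacobianMod (U ∘ T) q a (B * A) := by
  intro g x y hx hy hxy i
  have hTx : ∀ i, q ∣ T x i - T a i := hT.dvd_sub hx (fun _ => by simp) hx
  have hTy : ∀ i, q ∣ T y i - T a i := hT.dvd_sub hy (fun _ => by simp) hy
  set e := T x - T y - A *ᵥ (x - y) with he
  have hBe : q * g ∣ (B *ᵥ e) i := Finset.dvd_sum fun j _ => (hT g x y hx hy hxy j).mul_left _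
  have split : U (T x) i - U (T y) i - ((B * A) *ᵥ (x - y)) i =
      (U (T x) i - U (T y) i - (B *ᵥ (T x - T y)) i) + (B *ᵥ e) i := by
    simp only [← mulVec_mulVec, he, mulVec_sub, Pi.sub_apply]
    ring
  rw [Function.comp_apply, Function.comp_apply, split]
  exact dvd_add (hU g _ _ hTx hTy (hT.dvd_sub hx hy hxy) i) hBe

variable [DecidableEq ι]

theorem iterate (hT : HasJacobianMod T q a A) (hTa : ∀ i, q ∣ T a i - a i) :
    ∀ n, HasJacobianMod T^[n] q a (A ^ n)
  | 0 => by simpa using hasJacobianMod_id q a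
  | n + 1 => by
    rw [iterate_succ, pow_succ]
    exact ((hT.iterate hTa n).of_dvd_sub hTa).comp hT

end HasJacobianMod

theorem exists_hasJacobianMod_iterate [DecidableEq ι] {T : (ι → R) → ι → R} {q : R}
    (hT : ∀ a, ∃ A, HasJacobianMod T q a A) : ∀ n a, ∃ A, HasJacobianMod T^[n] q a A
  | 0, a => ⟨1, hasJacobianMod_id q a⟩
  | n + 1, a => by
    obtain ⟨A, hA⟩ := hT a
    obtain ⟨B, hB⟩ := exists_hasJacobianMod_iterate hT n (T a)
    exact ⟨B * A, hB.comp hA⟩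

end Linearization

section Periods

variable {ι : Type*} [Fintype ι]

theorem exists_eq_smul_not_dvd {p : ℤ} (hp : ¬IsUnit p) {d : ℕ → ι → ℤ} (hd : d 0 ≠ 0) (ℓ : ℕ) :
    ∃ g ≠ (0 : ℤ), ∃ δ : ℕ → ι → ℤ, (∀ j ≤ ℓ, d j = g • δ j) ∧ ∃ j ≤ ℓ, ∃ i, ¬p ∣ δ j i := by
  set s := range (ℓ + 1) ×ˢ (univ : Finset ι)
  obtain ⟨i₀, hi₀⟩ : ∃ i, d 0 i ≠ 0 := Function.ne_iff.mp hd
  have hs : (0, i₀) ∈ s := by simp [s]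
  obtain ⟨δ, hδ, hgcd⟩ := s.extract_gcd (fun ji => d ji.1 ji.2) ⟨_, hs⟩
  have hg : s.gcd (fun ji => d ji.1 ji.2) ≠ 0 := fun h => hi₀ (Finset.gcd_eq_zero_iff.mp h _ hs)
  refine ⟨_, hg, fun j i => δ (j, i),
    fun j hj => funext fun i => hδ (j, i) (by simp [s]; omega), ?_⟩
  by_contra! h
  refine hp (isUnit_of_dvd_one (hgcd ▸ Finset.dvd_gcd fun ji hji => h ji.1 ?_ ji.2))
  simp only [s, mem_product, mem_range] at hji
  omega

variable [DecidableEq ι]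

theorem IsIdempotentElem.mulVec_cycle_eq {S : Type*} [Semiring S] {E : Matrix ι ι S}
    (hE : IsIdempotentElem E) {ℓ : ℕ} (hℓ : ℓ ≠ 0) {v : ℕ → ι → S}
    (hv : ∀ j < ℓ, v (j + 1) = E *ᵥ v j) (hper : v ℓ = v 0) : ∀ j ≤ ℓ, v j = v 0 := by
  have hpow : ∀ j ≤ ℓ, v j = (E ^ j) *ᵥ v 0 := by
    intro j
    induction j with
    | zero => simp
    | succ j ih => intro hj; rw [hv j (by omega), ih (by omega), mulVec_mulVec, pow_succ']
  have hfix : E *ᵥ v 0 = v 0 := by rw [← hE.pow_eq hℓ, ← hpow ℓ le_rfl, hper]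
  rintro (_ | j) hj
  · rfl
  · rw [hpow _ hj, hE.pow_eq j.succ_ne_zero, hfix]

theorem prime_dvd_of_mulVec_cycle {p ℓ : ℕ} (hp : p.Prime) (hℓ : ℓ.Prime) {A : Matrix ι ι ℤ}
    (hA : IsIdempotentElem ((Int.castRingHom (ZMod (p ^ 2))).mapMatrix A)) {δ : ℕ → ι → ℤ}
    (hstep : ∀ j < ℓ, ∀ i, (p : ℤ) ^ 2 ∣ δ (j + 1) i - (A *ᵥ δ j) i) (hper : δ ℓ = δ 0)
    (hsum : ∑ j ∈ range ℓ, δ j = 0) : ∀ j ≤ ℓ, ∀ i, (p : ℤ) ∣ δ j i := by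
  set ρ := Int.castRingHom (ZMod (p ^ 2))
  have hρ : ∀ u w : ℤ, ρ u = ρ w ↔ (p : ℤ) ^ 2 ∣ w - u := fun u w => by
    simp [ρ, ZMod.intCast_eq_intCast_iff_dvd_sub]
  set v : ℕ → ι → ZMod (p ^ 2) := fun j => ρ ∘ δ j
  have hv : ∀ j < ℓ, v (j + 1) = ρ.mapMatrix A *ᵥ v j := fun j hj => funext fun i => by
    rw [RingHom.mapMatrix_apply, ← RingHom.map_mulVec]
    exact ((hρ _ _).mpr (hstep j hj i)).symm
  have hconst := hA.mulVec_cycle_eq hℓ.ne_zero hv (by simp only [v, hper])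
  have h0 : ∀ i, (p : ℤ) ∣ δ 0 i := fun i => by
    refine Int.dvd_of_sq_dvd_prime_mul hp hℓ ?_
    have : ρ (ℓ * δ 0 i) = ρ 0 := by
      calc ρ (ℓ * δ 0 i) = ∑ j ∈ range ℓ, v j i := by
            rw [Finset.sum_congr rfl fun j hj => congrFun (hconst j (mem_range.mp hj).le) i]
            simp [v]
        _ = ρ (∑ j ∈ range ℓ, δ j i) := by simp [v]
        _ = ρ 0 := by rw [← Finset.sum_apply, hsum, Pi.zero_apply]
    simpa using (hρ _ _).mp this
  intro j hj i
  have hj0 : (p : ℤ) ^ 2 ∣ δ j i - δ 0 i := (hρ _ _).mp (congrFun (hconst j hj) i).symm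
  simpa using dvd_add ((dvd_pow_self _ two_ne_zero).trans hj0) (h0 i)

theorem HasJacobianMod.minimalPeriod_not_prime {p : ℕ} (hp : p.Prime) {T : (ι → ℤ) → ι → ℤ}
    {a : ι → ℤ} {A : Matrix ι ι ℤ} (hT : HasJacobianMod T ((p : ℤ) ^ 2) a A)
    (hA : IsIdempotentElem ((Int.castRingHom (ZMod (p ^ 2))).mapMatrix A))
    (horbit : ∀ j i, (p : ℤ) ^ 2 ∣ T^[j] a i - a i) : ¬(minimalPeriod T a).Prime := by
  intro hℓ
  set ℓ := minimalPeriod T a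
  set d : ℕ → ι → ℤ := fun j => T^[j + 1] a - T^[j] a
  have hTℓ : T^[ℓ] a = a := isPeriodicPt_minimalPeriod T a
  have hdℓ : d ℓ = d 0 := by simp [d, iterate_succ_apply', hTℓ]
  have hd0 : d 0 ≠ 0 := fun h =>
    hℓ.ne_one (minimalPeriod_eq_one_iff_isFixedPt.mpr (sub_eq_zero.mp h))
  obtain ⟨g, hg, δ, hdδ, j₀, hj₀, i₀, hδ₀⟩ :=
    exists_eq_smul_not_dvd (Nat.prime_iff_prime_int.mp hp).not_isUnit hd0 ℓ
  -- Dividing the Taylor relation between consecutive differences by their common factor `g`.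
  have hstep : ∀ j < ℓ, ∀ i, (p : ℤ) ^ 2 ∣ δ (j + 1) i - (A *ᵥ δ j) i := by
    intro j hj i
    have := hT g (T^[j + 1] a) (T^[j] a) (horbit _) (horbit _)
      (fun i => ⟨δ j i, congrFun (hdδ j hj.le) i⟩) i
    rw [← iterate_succ_apply' T, ← iterate_succ_apply' T] at this
    rw [← mul_dvd_mul_iff_right hg]
    convert this using 1
    change _ = d (j + 1) i - (A *ᵥ d j) i
    rw [hdδ j hj.le, hdδ (j + 1) hj, mulVec_smul, Pi.smul_apply, Pi.smul_apply, smul_eq_mul,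
      smul_eq_mul]
    ring
  have hper : δ ℓ = δ 0 :=
    smul_right_injective _ hg (by simp only [← hdδ _ le_rfl, ← hdδ 0 (Nat.zero_le _), hdℓ])
  have hsum : ∑ j ∈ range ℓ, δ j = 0 := by
    refine (smul_eq_zero.mp ?_).resolve_left hg
    rw [smul_sum, ← Finset.sum_congr rfl fun j hj => hdδ j (mem_range.mp hj).le,
      Finset.sum_range_sub (fun j => T^[j] a), hTℓ, iterate_zero_apply, sub_self]
  exact hδ₀ (prime_dvd_of_mulVec_cycle hp hℓ hA hstep hper hsum j₀ hj₀ i₀)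

theorem HasJacobianMod.isFixedPt_of_isPeriodicPt {p : ℕ} (hp : p.Prime)
    {T : (ι → ℤ) → ι → ℤ} {a : ι → ℤ} {A : Matrix ι ι ℤ} (hT : HasJacobianMod T ((p : ℤ) ^ 2) a A)
    (hA : IsIdempotentElem ((Int.castRingHom (ZMod (p ^ 2))).mapMatrix A))
    (horbit : ∀ j i, (p : ℤ) ^ 2 ∣ T^[j] a i - a i) {n : ℕ} (hn : 0 < n)
    (ha : IsPeriodicPt T n a) : IsFixedPt T a := by
  set m := minimalPeriod T a
  have hm : 0 < m := ha.minimalPeriod_pos hn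
  by_contra hfix
  have hm1 : m ≠ 1 := mt minimalPeriod_eq_one_iff_isFixedPt.mp hfix
  set ℓ := m.minFac
  have hk : m / ℓ ≠ 0 := (Nat.div_pos (Nat.minFac_le hm) (Nat.minFac_pos m)).ne'
  have hperiod : minimalPeriod T^[m / ℓ] a = ℓ := by
    rw [minimalPeriod_iterate_eq_div_gcd hk, Nat.gcd_eq_right (Nat.div_dvd_of_dvd m.minFac_dvd),
      Nat.div_div_self m.minFac_dvd hm.ne']
  refine (hT.iterate (horbit 1) (m / ℓ)).minimalPeriod_not_prime hp ?_ ?_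
    (by rw [hperiod]; exact Nat.minFac_prime hm1)
  · rw [map_pow]
    exact hA.pow _
  · intro j i
    rw [← iterate_mul]
    exact horbit _ i

theorem exists_iterate_dvd_sub_of_isPeriodicPt (f : ι → MvPolynomial ι ℤ) (q : ℕ) [NeZero q]
    {P : ι → ℤ} {k : ℕ} (hk : 0 < k) (hP : IsPeriodicPt (fun x i => eval x (f i)) k P) :
    ∃ n₀, 0 < n₀ ∧ n₀ ≤ q ^ Fintype.card ι ∧
      ∀ j i, (q : ℤ) ∣ (fun x i => eval x (f i))^[n₀ * j] P i - P i := by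
  set ρ := Int.castRingHom (ZMod q)
  set σ : (ι → ZMod q) → ι → ZMod q := fun v i => eval v (map ρ (f i))
  have hsemi : Semiconj (fun x => ρ ∘ x) (fun x i => eval x (f i)) σ :=
    fun x => funext fun i => by
    change ρ (eval x (f i)) = eval (ρ ∘ x) (map ρ (f i))
    rw [eval_map, eval₂_comp]
  refine ⟨minimalPeriod σ (ρ ∘ P), (hP.map hsemi).minimalPeriod_pos hk, ?_, fun j i => ?_⟩
  · simpa using minimalPeriod_le_card (f := σ) (x := ρ ∘ P)
  · have := congrFun ((hsemi.iterate_right _ P).trans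
      ((isPeriodicPt_minimalPeriod σ _).mul_const j)) i
    exact (ZMod.intCast_eq_intCast_iff_dvd_sub _ _ _).mp this.symm

end Periods

theorem stmt3_general (N : ℕ) :
    ∃ C : ℕ, 0 < C ∧
      ∀ (f : Fin N → MvPolynomial (Fin N) ℤ)
        (F : (Fin N → ℤ) → (Fin N → ℤ)),
        (∀ x, F x = fun i => MvPolynomial.eval x (f i)) →
        ∀ P : Fin N → ℤ, (∃ k, 0 < k ∧ F^[k] P = P) →
          Function.minimalPeriod F P ≤ C := by
  set c := (Fintype.card (Matrix (Fin N) (Fin N) (ZMod (2 ^ 2))))!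
  refine ⟨(2 ^ 2) ^ N * c, by positivity, fun f F hF P ⟨k, hk, hP⟩ => ?_⟩
  obtain rfl : F = fun x i => eval x (f i) := funext hF
  set F : (Fin N → ℤ) → Fin N → ℤ := fun x i => eval x (f i)
  replace hP : IsPeriodicPt F k P := hP
  obtain ⟨n₀, hn₀, hn₀le, horbit⟩ := exists_iterate_dvd_sub_of_isPeriodicPt f (2 ^ 2) hk hP
  obtain ⟨B, hB⟩ := exists_hasJacobianMod_iterate (fun a => ⟨_, hasJacobianMod_eval f _ a⟩) n₀ P
  have hfix : IsFixedPt (F^[n₀])^[c] P :=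
    (hB.iterate (fun i => by simpa using horbit 1 i) c).isFixedPt_of_isPeriodicPt Nat.prime_two
      (by rw [map_pow]; exact isIdempotentElem_pow_factorial_card _)
      (fun j i => by rw [← iterate_mul, ← iterate_mul]; exact_mod_cast horbit (c * j) i)
      hk ((hP.iterate n₀).iterate c)
  have hdvd : minimalPeriod F P ∣ n₀ * c := by
    apply IsPeriodicPt.minimalPeriod_dvd
    rw [IsPeriodicPt, iterate_mul]
    exact hfix
  calc minimalPeriod F P ≤ n₀ * c := Nat.le_of_dvd (by positivity) hdvd
    _ ≤ (2 ^ 2) ^ N * c := Nat.mul_le_mul_right _ (by simpa using hn₀le)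

/-- For every `N ≥ 1` there is a constant `C = C(N) > 0` bounding the
primitive period of every integral periodic point of every polynomial endomorphism of `𝔸^N`. -/
theorem stmt3 (N : ℕ) (hN : 1 ≤ N) :
    ∃ C : ℕ, 0 < C ∧
      ∀ (f : Fin N → MvPolynomial (Fin N) ℤ)
        (F : (Fin N → ℤ) → (Fin N → ℤ)),
        (∀ x, F x = fun i => MvPolynomial.eval x (f i)) →
        ∀ P : Fin N → ℤ, (∃ k, 0 < k ∧ F^[k] P = P) →
          Function.minimalPeriod F P ≤ C :=
  stmt3_general N
end

section
/- Let p be a prime and n ≥ 0 an integer. Let A be a subalgebra of the product ℤ_p-algebra (ℤ_p)^(p^n) which is a local ring with maximal ideal 𝔪, which is free of rank p^n as a ℤ_p-module, and which is preserved by the ℤ_p-algebra automorphism σ of (ℤ_p)^(p^n) given by cyclic permutation of the coordinates. Assume that σ acts trivially on 𝔪/𝔪², i.e., σ(x) − x ∈ 𝔪² for every x ∈ 𝔪. Then n = 0 if p ≠ 2, and n ≤ 1 if p = 2. -/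
/-!
Let `N = pⁿ` and write `Δ_φ = φ - 1` for a ring endomorphism `φ` of `A`; it satisfies the
twisted Leibniz rule `Δ_φ(ab) = φ(a) Δ_φ(b) + Δ_φ(a) b`. The maximal ideal `𝔪` consists of the
elements all of whose coordinates are divisible by `p`, and `A = ℤ_p + 𝔪`, so the hypothesis
gives `Δ_τ(A) ⊆ 𝔪²` for every power `τ` of `σ`. Measuring elements by the `p`-adic valuation of
their coordinates, the Leibniz rule turns `Δ_τ(A) ⊆ pʲ` into `(Δ_τ)²(A) ⊆ pʲ⁺¹` and
`(Δ_τ)³(A) ⊆ pʲ⁺²` (for `j ≥ 2`).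

For odd `p` take `τ = σ^(N/p)`: expanding `τᵖ = (1 + Δ_τ)ᵖ = 1` and using `p ∣ C(p, 2)` gives
`p Δ_τ(A) ⊆ pʲ⁺²`, so by induction `Δ_τ(A) ⊆ ⋂ pʲ = 0`. For `p = 2` this gains nothing, and one
takes `τ = σ^(N/4)` and `ε = τ² - 1` instead: `τ⁴ = 1` gives `(Δ_τ)² ε τ³ = -2 ε`, and the same
bookkeeping shows `ε(A) = 0`. Either way `A` consists of vectors of period `< N`, which
contradicts `rank A = N`.
-/

open IsLocalRing

namespace RingHom

variable {A : Type*} [CommRing A]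

def diff (φ : A →+* A) : Module.End ℤ A := φ.toIntAlgHom.toLinearMap - 1

@[simp]
theorem diff_apply (φ : A →+* A) (x : A) : φ.diff x = φ x - x := rfl

theorem diff_mul (φ : A →+* A) (a b : A) : φ.diff (a * b) = φ a * φ.diff b + φ.diff a * b := by
  simp only [diff_apply, map_mul]; ring

theorem diff_diff_mul (φ ψ : A →+* A) (a b : A) :
    φ.diff (ψ.diff (a * b)) = φ (ψ a) * φ.diff (ψ.diff b) + φ.diff (ψ a) * ψ.diff b
      + φ (ψ.diff a) * φ.diff b + φ.diff (ψ.diff a) * b := by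
  simp only [diff_apply, map_mul, map_sub]; ring

theorem diff_apply_comm {φ ψ : A →+* A} (h : Commute φ ψ) (x : A) :
    φ.diff (ψ x) = ψ (φ.diff x) := by
  rw [diff_apply, diff_apply, map_sub, ← Function.comp_apply (f := φ), ← coe_mul, h.eq, coe_mul,
    Function.comp_apply]

theorem diff_diff_comm {φ ψ : A →+* A} (h : Commute φ ψ) (x : A) :
    φ.diff (ψ.diff x) = ψ.diff (φ.diff x) := by
  rw [ψ.diff_apply, map_sub, diff_apply_comm h, diff_apply, diff_apply]

theorem mapsTo_of_diff_mem {φ : A →+* A} {I : Ideal A} (h : ∀ x, φ.diff x ∈ I) :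
    Set.MapsTo φ I I :=
  fun a ha => by simpa using I.add_mem ha (h a)

theorem diff_pow_mem {φ : A →+* A} {I : Ideal A} (h : ∀ x, φ.diff x ∈ I) (k : ℕ) (x : A) :
    (φ ^ k).diff x ∈ I := by
  induction k generalizing x with
  | zero => simp
  | succ k ih =>
    have : (φ ^ (k + 1)).diff x = (φ ^ k).diff (φ x) + φ.diff x := by
      simp only [diff_apply, pow_succ, coe_mul, Function.comp_apply]; ring
    exact this ▸ I.add_mem (ih _) (h x)

theorem diff_mem_sq_of_forall_sub_algebraMap_mem {S : Type*} [CommRing S] [Algebra S A]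
    {I : Ideal A} {τ : A →+* A} (hτ : ∀ c, τ (algebraMap S A c) = algebraMap S A c)
    (hI : ∀ x, ∃ c, x - algebraMap S A c ∈ I) (htriv : ∀ x ∈ I, τ.diff x ∈ I ^ 2) (x : A) :
    τ.diff x ∈ I ^ 2 := by
  obtain ⟨c, hc⟩ := hI x
  simpa [hτ] using htriv _ hc

theorem sum_choose_smul_diff_pow (φ : A →+* A) (n : ℕ) (x : A) :
    ∑ m ∈ Finset.range (n + 1), n.choose m • (φ.diff ^ m) x = (φ ^ n) x := by
  have hφ : ⇑(φ.diff + 1) = φ := funext fun y => sub_add_cancel (φ y) y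
  rw [coe_pow, ← hφ, ← Module.End.coe_pow, (Commute.one_right _).add_pow, LinearMap.sum_apply]
  simp only [one_pow, mul_one, Module.End.mul_apply, Module.End.natCast_apply, map_nsmul]

theorem diff_diff_diff_sq_of_pow_four_eq_one {τ : A →+* A} (hτ : τ ^ 4 = 1) (x : A) :
    τ.diff (τ.diff ((τ ^ 2).diff ((τ ^ 3) x))) = -(2 * (τ ^ 2).diff x) := by
  have hmul (a b : ℕ) (y : A) : (τ ^ a) ((τ ^ b) y) = (τ ^ (a + b)) y := by rw [pow_add]; rfl
  have h1 : τ ((τ ^ 3) x) = x := by simpa [hτ] using hmul 1 3 x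
  have h2 : (τ ^ 2) ((τ ^ 3) x) = τ x := by
    rw [hmul, show 2 + 3 = 4 + 1 from rfl, pow_add, hτ, one_mul, pow_one]
  have h3 : τ (τ x) = (τ ^ 2) x := by rw [pow_two]; rfl
  have h4 : τ ((τ ^ 2) x) = (τ ^ 3) x := by rw [pow_succ' τ 2]; rfl
  simp only [diff_apply, map_sub, h1, h2, h3, h4]
  ring

end RingHom

section Divisibility

variable {A R : Type*} [CommRing A] [CommRing R] (ι : A →+* R) {π : R} {𝔪 : Ideal A}

theorem Ideal.dvd_apply_of_mem_mul {f : A →+ R} {c : R} {I J : Ideal A}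
    (h : ∀ a ∈ I, ∀ b ∈ J, c ∣ f (a * b)) {w : A} (hw : w ∈ I * J) : c ∣ f w :=
  Submodule.mul_induction_on hw h fun x y hx hy => by rw [map_add]; exact dvd_add hx hy

theorem sq_dvd_map_of_mem_sq (hπ : ∀ a ∈ 𝔪, π ∣ ι a) {w : A} (hw : w ∈ 𝔪 ^ 2) :
    π ^ 2 ∣ ι w := by
  rw [sq] at hw
  refine Ideal.dvd_apply_of_mem_mul (f := ι.toAddMonoidHom) (fun a ha b hb => ?_) hw
  simpa [sq] using mul_dvd_mul (hπ a ha) (hπ b hb)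

theorem pow_succ_dvd_map_diff_of_mem_sq (hπ : ∀ a ∈ 𝔪, π ∣ ι a) {φ : A →+* A}
    (hφ : Set.MapsTo φ 𝔪 𝔪) {j : ℕ} (hj : ∀ x, π ^ j ∣ ι (φ.diff x)) {w : A}
    (hw : w ∈ 𝔪 ^ 2) : π ^ (j + 1) ∣ ι (φ.diff w) := by
  rw [sq] at hw
  refine Ideal.dvd_apply_of_mem_mul (f := ι.toAddMonoidHom.comp φ.diff.toAddMonoidHom)
    (fun a ha b hb => ?_) hw
  change π ^ (j + 1) ∣ ι (φ.diff (a * b))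
  rw [φ.diff_mul, map_add, map_mul, map_mul]
  exact dvd_add (pow_succ' π j ▸ mul_dvd_mul (hπ _ (hφ ha)) (hj b))
    (pow_succ π j ▸ mul_dvd_mul (hj a) (hπ b hb))

theorem pow_succ_dvd_map_diff_diff_of_mem_sq (hπ : ∀ a ∈ 𝔪, π ∣ ι a) {φ ψ : A →+* A}
    (hφψ : Commute φ ψ) (hφ : Set.MapsTo φ 𝔪 𝔪) (hψ : Set.MapsTo ψ 𝔪 𝔪) {i j k : ℕ}
    (hk : k + 1 ≤ i + j) (hi : ∀ x, π ^ i ∣ ι (φ.diff x)) (hj : ∀ x, π ^ j ∣ ι (ψ.diff x))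
    (hij : ∀ x, π ^ k ∣ ι (φ.diff (ψ.diff x))) {w : A} (hw : w ∈ 𝔪 ^ 2) :
    π ^ (k + 1) ∣ ι (φ.diff (ψ.diff w)) := by
  rw [sq] at hw
  refine Ideal.dvd_apply_of_mem_mul (f := ι.toAddMonoidHom.comp (φ.diff * ψ.diff).toAddMonoidHom)
    (fun a ha b hb => ?_) hw
  have hcross : π ^ (k + 1) ∣ π ^ i * π ^ j := by rw [← pow_add]; exact pow_dvd_pow π hk
  change π ^ (k + 1) ∣ ι (φ.diff (ψ.diff (a * b)))
  rw [φ.diff_diff_mul, ← ψ.diff_apply_comm hφψ.symm]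
  simp only [map_add, map_mul]
  refine dvd_add (dvd_add (dvd_add ?_ ?_) ?_) ?_
  · exact pow_succ' π k ▸ mul_dvd_mul (hπ _ (hφ (hψ ha))) (hij b)
  · exact hcross.trans (mul_dvd_mul (hi _) (hj b))
  · exact hcross.trans (mul_comm (π ^ j) (π ^ i) ▸ mul_dvd_mul (hj _) (hi b))
  · exact pow_succ π k ▸ mul_dvd_mul (hij a) (hπ b hb)

theorem pow_dvd_map_diff_of_pow_eq_one {p : ℕ} (hp : p.Prime) (hp2 : p ≠ 2)
    (hreg : IsLeftRegular (p : R)) (hπ : ∀ a ∈ 𝔪, (p : R) ∣ ι a) {τ : A →+* A}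
    (hτ : τ ^ p = 1) (hsq : ∀ x, τ.diff x ∈ 𝔪 ^ 2) (k : ℕ) (x : A) :
    (p : R) ^ k ∣ ι (τ.diff x) := by
  have hτ𝔪 := τ.mapsTo_of_diff_mem fun x => Ideal.pow_le_self two_ne_zero (hsq x)
  suffices ∀ j, 2 ≤ j → ∀ x, (p : R) ^ j ∣ ι (τ.diff x) from
    (pow_dvd_pow _ (le_max_left k 2)).trans (this _ (le_max_right k 2) x)
  intro j hj
  induction j, hj using Nat.le_induction with
  | base => exact fun x => sq_dvd_map_of_mem_sq ι hπ (hsq x)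
  | succ j hj ih =>
    have h2 (x : A) : (p : R) ^ (j + 1) ∣ ι (τ.diff (τ.diff x)) :=
      pow_succ_dvd_map_diff_of_mem_sq ι hπ hτ𝔪 ih (hsq x)
    have h3 (x : A) : (p : R) ^ (j + 2) ∣ ι (τ.diff (τ.diff (τ.diff x))) :=
      pow_succ_dvd_map_diff_diff_of_mem_sq ι hπ (Commute.refl τ) hτ𝔪 hτ𝔪 (by omega) ih ih h2
        (hsq x)
    intro x
    -- the terms `m ≥ 2` of `∑ C(p, m) (Δ_τ)ᵐ x = τᵖ x = x`; for `m = 2` this uses `p ≠ 2`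
    have hterm (m : ℕ) : (p : R) ^ (j + 2) ∣ ι (p.choose (m + 2) • (τ.diff ^ (m + 2)) x) := by
      rw [map_nsmul, nsmul_eq_mul]
      rcases m with _ | m
      · obtain ⟨c, hc⟩ := hp.dvd_choose_self two_ne_zero (lt_of_le_of_ne hp.two_le (Ne.symm hp2))
        rw [hc, Nat.cast_mul, pow_succ']
        exact mul_dvd_mul (dvd_mul_right _ _) (h2 x)
      · rw [Module.End.pow_apply, Function.iterate_succ_apply', Function.iterate_succ_apply',
          Function.iterate_succ_apply']
        exact dvd_mul_of_dvd_right (h3 _) _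
    have hsum := τ.sum_choose_smul_diff_pow p x
    rw [hτ, show p + 1 = p - 1 + 1 + 1 by have := hp.pos; omega, Finset.sum_range_succ',
      Finset.sum_range_succ'] at hsum
    simp only [Nat.add_assoc, Nat.reduceAdd, zero_add, Nat.choose_zero_right,
      Nat.choose_one_right, pow_zero, pow_one, one_smul, Module.End.one_apply, RingHom.coe_one,
      id_eq, add_eq_right] at hsum
    have hpx : (p : R) * ι (τ.diff x)
        = -ι (∑ m ∈ Finset.range (p - 1), p.choose (m + 2) • (τ.diff ^ (m + 2)) x) := by
      rw [eq_neg_iff_add_eq_zero, add_comm, ← nsmul_eq_mul, ← map_nsmul, ← map_add, hsum,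
        map_zero]
    rw [← hreg.dvd_cancel_left, ← pow_succ', hpx, dvd_neg, map_sum]
    exact Finset.dvd_sum fun m _ => hterm m

theorem two_pow_dvd_map_diff_sq_of_pow_four_eq_one (hreg : IsLeftRegular (2 : R))
    (hπ : ∀ a ∈ 𝔪, (2 : R) ∣ ι a) {τ : A →+* A} (hτ : τ ^ 4 = 1)
    (hsq : ∀ x, τ.diff x ∈ 𝔪 ^ 2) (k : ℕ) (x : A) : (2 : R) ^ k ∣ ι ((τ ^ 2).diff x) := by
  have hsq2 := τ.diff_pow_mem hsq 2
  have hτ𝔪 := τ.mapsTo_of_diff_mem fun x => Ideal.pow_le_self two_ne_zero (hsq x)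
  have hτ2𝔪 := (τ ^ 2).mapsTo_of_diff_mem fun x => Ideal.pow_le_self two_ne_zero (hsq2 x)
  have hcomm : Commute τ (τ ^ 2) := (Commute.refl τ).pow_right 2
  suffices ∀ j, 2 ≤ j → ∀ x, (2 : R) ^ j ∣ ι ((τ ^ 2).diff x) from
    (pow_dvd_pow _ (le_max_left k 2)).trans (this _ (le_max_right k 2) x)
  intro j hj
  induction j, hj using Nat.le_induction with
  | base => exact fun x => sq_dvd_map_of_mem_sq ι hπ (hsq2 x)
  | succ j hj ih =>
    have h1 (x : A) : (2 : R) ^ (j + 1) ∣ ι (τ.diff ((τ ^ 2).diff x)) := by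
      rw [τ.diff_diff_comm hcomm]
      exact pow_succ_dvd_map_diff_of_mem_sq ι hπ hτ2𝔪 ih (hsq x)
    have h3 (x : A) : (2 : R) ^ (j + 2) ∣ ι (τ.diff (τ.diff ((τ ^ 2).diff x))) := by
      rw [τ.diff_diff_comm hcomm x]
      exact pow_succ_dvd_map_diff_diff_of_mem_sq ι hπ hcomm hτ𝔪 hτ2𝔪 (by omega)
        (fun x => sq_dvd_map_of_mem_sq ι hπ (hsq x)) ih h1 (hsq x)
    intro x
    have := h3 ((τ ^ 3) x)
    rwa [τ.diff_diff_diff_sq_of_pow_four_eq_one hτ, map_neg, dvd_neg, map_mul, map_ofNat,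
      pow_succ', hreg.dvd_cancel_left] at this

end Divisibility

theorem PadicInt.eq_zero_of_forall_pow_dvd {p : ℕ} [Fact p.Prime] {x : ℤ_[p]}
    (h : ∀ k, (p : ℤ_[p]) ^ k ∣ x) : x = 0 :=
  ext_of_toZModPow.mp fun k => by
    rw [map_zero, ← RingHom.mem_ker, ker_toZModPow, Ideal.mem_span_singleton]
    exact h k

section LocalSubalgebra

variable {p : ℕ} [Fact p.Prime] {ι : Type*} {A : Subalgebra ℤ_[p] (ι → ℤ_[p])} [IsLocalRing A]

theorem Subalgebra.mem_maximalIdeal_iff_dvd_apply (i : ι) (x : A) :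
    x ∈ maximalIdeal A ↔ (p : ℤ_[p]) ∣ (x : ι → ℤ_[p]) i := by
  let ψ : A →+* ZMod p :=
    PadicInt.toZMod.comp ((Pi.evalRingHom _ i).comp (A.val : A →+* ι → ℤ_[p]))
  rw [← eq_maximalIdeal (RingHom.ker_isMaximal_of_surjective ψ (ZMod.ringHom_surjective ψ)),
    RingHom.mem_ker]
  change PadicInt.toZMod ((x : ι → ℤ_[p]) i) = 0 ↔ _
  rw [← RingHom.mem_ker, PadicInt.ker_toZMod, PadicInt.maximalIdeal_eq_span_p,
    Ideal.mem_span_singleton]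

theorem Subalgebra.sub_algebraMap_apply_mem_maximalIdeal (i : ι) (x : A) :
    x - algebraMap ℤ_[p] A ((x : ι → ℤ_[p]) i) ∈ maximalIdeal A := by
  rw [Subalgebra.mem_maximalIdeal_iff_dvd_apply i]
  simp

end LocalSubalgebra

section CyclicShift

open Fin.NatCast

theorem Fin.apply_eq_apply_mod_of_periodic {α : Type*} {N d : ℕ} [NeZero N] {v : Fin N → α}
    (hv : ∀ i, v (i + d) = v i) (i : Fin N) : v i = v ((i.val % d : ℕ) : Fin N) := by
  have key (q r : ℕ) : v ((r + q * d : ℕ) : Fin N) = v r := by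
    induction q with
    | zero => simp
    | succ q ih => rw [add_mul, one_mul, ← add_assoc, Nat.cast_add, hv, ih]
  conv_lhs => rw [← Fin.cast_val_eq_self i, ← Nat.mod_add_div' i.val d]
  exact key _ _

theorem Module.finrank_le_of_injective_periodic {K M : Type*} [Ring K] [StrongRankCondition K]
    [AddCommGroup M] [Module K M] {N d : ℕ} [NeZero N] (hd : 0 < d) (f : M →ₗ[K] Fin N → K)
    (hf : Function.Injective f) (hper : ∀ x i, f x (i + d) = f x i) : finrank K M ≤ d := by
  let restrict := LinearMap.funLeft K K fun j : Fin d => ((j : ℕ) : Fin N)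
  have hinj : Function.Injective (restrict ∘ₗ f) := by
    refine (injective_iff_map_eq_zero _).2 fun x hx => hf ?_
    rw [map_zero]
    funext i
    rw [Fin.apply_eq_apply_mod_of_periodic (hper x) i]
    exact congrFun hx ⟨i.val % d, Nat.mod_lt _ hd⟩
  simpa using LinearMap.finrank_le_finrank_of_injective hinj

variable {R S : Type*} [CommSemiring R] [CommRing S] [Algebra R S] {N : ℕ} [NeZero N]

def Subalgebra.cyclicShift (A : Subalgebra R (Fin N → S))
    (hA : ∀ x ∈ A, (fun i => x (i + 1)) ∈ A) : A →+* A :=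
  ((RingHom.pi fun i => Pi.evalRingHom _ (i + 1)).comp (A.val : A →+* Fin N → S)).codRestrict A
    fun x => hA x x.2

variable {A : Subalgebra R (Fin N → S)} (hA : ∀ x ∈ A, (fun i => x (i + 1)) ∈ A)

theorem Subalgebra.cyclicShift_pow_apply (t : ℕ) (x : A) (i : Fin N) :
    ((A.cyclicShift hA ^ t) x : Fin N → S) i = (x : Fin N → S) (i + t) := by
  induction t generalizing i with
  | zero => simp
  | succ t ih =>
    rw [pow_succ', RingHom.coe_mul, Function.comp_apply]
    change ((A.cyclicShift hA ^ t) x : Fin N → S) (i + 1) = _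
    rw [ih, Nat.cast_succ, add_assoc, add_comm 1]

theorem Subalgebra.cyclicShift_pow_card : A.cyclicShift hA ^ N = 1 := by
  refine RingHom.ext fun x => Subtype.ext <| funext fun i => ?_
  rw [cyclicShift_pow_apply, Fin.natCast_self, add_zero]
  rfl

theorem Subalgebra.finrank_le_of_pow_dvd_cyclicShift_pow_diff {p : ℕ} [Fact p.Prime]
    {A : Subalgebra ℤ_[p] (Fin N → ℤ_[p])} (hA : ∀ x ∈ A, (fun i => x (i + 1)) ∈ A)
    {d : ℕ} (hd : 0 < d)
    (h : ∀ i k x, (p : ℤ_[p]) ^ k ∣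
      ((Pi.evalRingHom _ i).comp (A.val : A →+* Fin N → ℤ_[p])) ((A.cyclicShift hA ^ d).diff x)) :
    Module.finrank ℤ_[p] A ≤ d := by
  refine Module.finrank_le_of_injective_periodic hd A.val.toLinearMap Subtype.val_injective
    fun x i => ?_
  have hx := PadicInt.eq_zero_of_forall_pow_dvd fun k => h i k x
  change ((A.cyclicShift hA ^ d) x : Fin N → ℤ_[p]) i - (x : Fin N → ℤ_[p]) i = 0 at hx
  rwa [cyclicShift_pow_apply, sub_eq_zero] at hx

end CyclicShift

theorem stmt5_general (p : ℕ) [hp : Fact p.Prime] (n : ℕ)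
    (A : Subalgebra ℤ_[p] (Fin (p ^ n) → ℤ_[p]))
    (hloc : IsLocalRing A)
    (hrank : Module.finrank ℤ_[p] A = p ^ n)
    -- `σ` sends `(a₀, a₁, …, a_{pⁿ-1})` to `(a₁, …, a_{pⁿ-1}, a₀)`; it preserves `A`
    -- and `σA` is the induced map on `A`:
    (σA : A → A)
    (hσA : ∀ x : A, (σA x : Fin (p ^ n) → ℤ_[p]) = fun i => (x : Fin (p ^ n) → ℤ_[p]) (i + 1))
    -- `σ` acts trivially on `𝔪/𝔪²`:
    (htriv : ∀ x : A, x ∈ IsLocalRing.maximalIdeal A →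
      σA x - x ∈ (IsLocalRing.maximalIdeal A) ^ 2) :
    (p ≠ 2 → n = 0) ∧ (p = 2 → n ≤ 1) := by
  have hA : ∀ x ∈ A, (fun i => x (i + 1)) ∈ A := fun x hx => hσA ⟨x, hx⟩ ▸ (σA ⟨x, hx⟩).2
  set σ := A.cyclicShift hA
  have hσ (x : A) : σ x = σA x := Subtype.ext (hσA x).symm
  have hsq : ∀ x, σ.diff x ∈ maximalIdeal A ^ 2 :=
    σ.diff_mem_sq_of_forall_sub_algebraMap_mem (fun _ => rfl)
      (fun x => ⟨_, A.sub_algebraMap_apply_mem_maximalIdeal 0 x⟩)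
      fun x hx => by rw [RingHom.diff_apply, hσ]; exact htriv x hx
  have hπ (i) : ∀ a ∈ maximalIdeal A, (p : ℤ_[p]) ∣ (a : Fin (p ^ n) → ℤ_[p]) i :=
    fun a => (A.mem_maximalIdeal_iff_dvd_apply i a).1
  have hreg : IsLeftRegular (p : ℤ_[p]) :=
    (IsRegular.of_ne_zero (Nat.cast_ne_zero.2 hp.out.ne_zero)).left
  refine ⟨fun hp2 => ?_, fun hp2 => ?_⟩
  · by_contra hn
    obtain ⟨m, rfl⟩ := Nat.exists_eq_add_one.mpr (Nat.pos_of_ne_zero hn)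
    have hle := A.finrank_le_of_pow_dvd_cyclicShift_pow_diff hA (pow_pos hp.out.pos m)
      fun i k x => pow_dvd_map_diff_of_pow_eq_one _ hp.out hp2 hreg (hπ i)
        (by rw [← pow_mul, ← pow_succ, A.cyclicShift_pow_card]) (σ.diff_pow_mem hsq _) k x
    exact (Nat.pow_lt_pow_right hp.out.one_lt (by omega)).not_ge (hrank ▸ hle)
  · subst hp2
    by_contra hn
    obtain ⟨m, rfl⟩ : ∃ m, n = m + 2 := ⟨n - 2, by omega⟩
    have hle := A.finrank_le_of_pow_dvd_cyclicShift_pow_diff hA (d := 2 ^ (m + 1)) (by positivity)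
      fun i k x => by
        rw [show σ ^ 2 ^ (m + 1) = (σ ^ 2 ^ m) ^ 2 by rw [← pow_mul, ← pow_succ]]
        exact two_pow_dvd_map_diff_sq_of_pow_four_eq_one _ hreg (hπ i)
          (by rw [← pow_mul, show 2 ^ m * 4 = 2 ^ (m + 2) by ring, A.cyclicShift_pow_card])
          (σ.diff_pow_mem hsq _) k x
    exact (Nat.pow_lt_pow_right (by norm_num) (by omega)).not_ge (hrank ▸ hle)

/-- Fakhruddin. Let `p` be a prime and `n ≥ 0`. Let `A` be a
`ℤ_p`-subalgebra of the product algebra `(ℤ_p)^(p^n)` which is a local ring with maximal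
ideal `𝔪`, free of rank `p^n` as a `ℤ_p`-module, preserved by the cyclic coordinate
permutation `σ`, and such that `σ` acts trivially on `𝔪/𝔪²`. Then `n = 0` if `p ≠ 2`
and `n ≤ 1` if `p = 2`. -/
theorem stmt5 (p : ℕ) [hp : Fact p.Prime] (n : ℕ)
    (A : Subalgebra ℤ_[p] (Fin (p ^ n) → ℤ_[p]))
    (hloc : IsLocalRing A)
    (hfree : Module.Free ℤ_[p] A)
    (hrank : Module.finrank ℤ_[p] A = p ^ n)
    -- `σ` sends `(a₀, a₁, …, a_{pⁿ-1})` to `(a₁, …, a_{pⁿ-1}, a₀)`; it preserves `A`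
    -- and `σA` is the induced map on `A`:
    (σA : A → A)
    (hσA : ∀ x : A, (σA x : Fin (p ^ n) → ℤ_[p]) = fun i => (x : Fin (p ^ n) → ℤ_[p]) (i + 1))
    -- `σ` acts trivially on `𝔪/𝔪²`:
    (htriv : ∀ x : A, x ∈ IsLocalRing.maximalIdeal A →
      σA x - x ∈ (IsLocalRing.maximalIdeal A) ^ 2) :
    (p ≠ 2 → n = 0) ∧ (p = 2 → n ≤ 1) :=
  stmt5_general p (hp := hp) n A hloc hrank σA hσA htriv
end

section
/- Let f ∈ ℤ[t] be a polynomial with integer coefficients and let x ∈ ℤ be a periodic point of the map t ↦ f(t) on ℤ. Then the primitive period of x is at most 2. -/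
/-- Any integral periodic point of a polynomial `f ∈ ℤ[t]` has
primitive period at most 2. -/
theorem stmt6 (f : Polynomial ℤ) (x : ℤ)
    (hx : ∃ n, 0 < n ∧ (fun t => f.eval t)^[n] x = x) :
    Function.minimalPeriod (fun t => f.eval t) x ≤ 2 := by
  obtain ⟨m, hm, hmx⟩ := hx
  set F : ℤ → ℤ := fun t => f.eval t with hF
  have hmem : x ∈ Function.periodicPts F := ⟨m, hm, hmx⟩
  set n := Function.minimalPeriod F x with hn
  have hnpos : 0 < n := Function.minimalPeriod_pos_of_mem_periodicPts hmem
  set d : ℕ → ℤ := fun i => F^[i + 1] x - F^[i] x with hd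
  have hdvd : ∀ i, d i ∣ d (i + 1) := by
    intro i
    have h := Polynomial.sub_dvd_eval_sub (F^[i + 1] x) (F^[i] x) f
    have e : d (i + 1) = f.eval (F^[i + 1] x) - f.eval (F^[i] x) := by
      show F^[i + 1 + 1] x - F^[i + 1] x = _
      rw [Function.iterate_succ_apply' F (i + 1) x, Function.iterate_succ_apply' F i x]
    rw [e]
    exact h
  have hchain : ∀ i j, i ≤ j → d i ∣ d j := by
    intro i j hij
    induction j with
    | zero => simp_all
    | succ k ih =>
      rcases Nat.lt_or_ge i (k + 1) with h | h
      · exact (ih (Nat.lt_succ_iff.mp h)).trans (hdvd k)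
      · have : i = k + 1 := le_antisymm hij h
        simp [this]
  have hxn : F^[n] x = x := Function.iterate_minimalPeriod
  have hdn : d n = d 0 := by
    have h1 : F^[n + 1] x = F^[1] x := by
      rw [add_comm, Function.iterate_add_apply, hxn]
    show F^[n + 1] x - F^[n] x = F^[0 + 1] x - F^[0] x
    rw [h1, hxn]; simp
  have habs : ∀ i ≤ n, d i = d 0 ∨ d i = -d 0 := by
    intro i hi
    have h1 : d 0 ∣ d i := hchain 0 i (Nat.zero_le i)
    have h2 : d i ∣ d 0 := hdn ▸ hchain i n hi
    have := Int.natAbs_dvd_natAbs.mpr h1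
    have := Int.natAbs_dvd_natAbs.mpr h2
    have hab : (d i).natAbs = (d 0).natAbs := Nat.dvd_antisymm ‹_› ‹_›
    rcases Int.natAbs_eq_natAbs_iff.mp hab with h | h
    · exact Or.inl h
    · exact Or.inr h
  have hsum : ∑ i ∈ Finset.range n, d i = 0 := by
    have := Finset.sum_range_sub (fun i => F^[i] x) n
    simp only [hd]
    rw [this, hxn]; simp
  by_cases h0 : d 0 = 0
  · -- fixed point
    have hfix : Function.IsPeriodicPt F 1 x := by
      have hfx : F x = x := by
        have h := h0
        simp only [hd, zero_add, Function.iterate_one, Function.iterate_zero, id_eq,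
          sub_eq_zero] at h
        exact h
      simpa [Function.IsPeriodicPt, Function.IsFixedPt] using hfx
    calc n ≤ 1 := hfix.minimalPeriod_le Nat.one_pos
      _ ≤ 2 := by norm_num
  · by_cases hall : ∀ i < n, d i = d 0
    · exfalso
      have : ∑ i ∈ Finset.range n, d i = n * d 0 := by
        rw [Finset.sum_congr rfl fun i hi => hall i (Finset.mem_range.mp hi)]
        simp [mul_comm]
      rw [hsum] at this
      have : (n : ℤ) = 0 ∨ d 0 = 0 := mul_eq_zero.mp this.symm
      rcases this with h | h
      · exact absurd h (by exact_mod_cast hnpos.ne')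
      · exact h0 h
    · push_neg at hall
      obtain ⟨j, hjn, hj⟩ := hall
      have hex : ∃ i, d i ≠ d 0 := ⟨j, hj⟩
      set i := Nat.find hex with hi
      have hine : d i ≠ d 0 := Nat.find_spec hex
      have hile : i ≤ j := Nat.find_min' hex hj
      have hipos : 0 < i := by
        rcases Nat.eq_zero_or_pos i with h | h
        · exact absurd (by rw [h]) hine
        · exact h
      obtain ⟨k, hk⟩ : ∃ k, i = k + 1 := ⟨i - 1, (Nat.succ_pred_eq_of_pos hipos).symm⟩
      have hdk : d k = d 0 := by
        by_contra h
        exact absurd (Nat.find_min' hex h) (by omega)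
      have hdi : d i = -d 0 := by
        rcases habs i (le_of_lt (lt_of_le_of_lt hile hjn)) with h | h
        · exact absurd h hine
        · exact h
      -- F^[k+2] x = F^[k] x
      have hkey : F^[k + 1 + 1] x = F^[k] x := by
        have h1 : d (k + 1) = -(d k) := by
          rw [hdk]; rw [hk] at hdi; exact hdi
        have e1 : F^[k + 1 + 1] x - F^[k + 1] x = -(F^[k + 1] x - F^[k] x) := h1
        linarith
      have hper2 : Function.IsPeriodicPt F 2 (F^[k] x) := by
        show F^[2] (F^[k] x) = F^[k] x
        rw [← Function.iterate_add_apply]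
        rw [show 2 + k = k + 1 + 1 by omega]
        exact hkey
      have := hper2.minimalPeriod_le (by norm_num)
      rwa [Function.minimalPeriod_apply_iterate hmem k] at this
end

section
/- Let N ≥ 1, let F : ℤ^N → ℤ^N be a polynomial endomorphism over ℤ, and let P ∈ ℤ^N be an F-periodic point with primitive period n. Then no prime q > 2^N divides n. -/
/-!
Write `n = q * m` and `G = F^[m]`, so that `P` is a `G`-periodic point of period `q`. Since `G`
commutes with reduction modulo every integer, induction on `k` shows that the whole `G`-orbit of `P`
is congruent to `P` modulo `2^k`: once this holds modulo `2^k`, the orbit modulo `2^(k+1)` lies among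
the `2^N` lifts of the class of `P` modulo `2^k`, and a point of prime period `q > 2^N` cannot have an orbit that
small, so it is fixed. Hence `G P = P`, i.e. `F^[m] P = P` with `0 < m < n`.
-/

open Function

theorem Function.IsPeriodicPt.isFixedPt_of_card_lt {α : Type*} {g : α → α} {x : α} {p : ℕ}
    (hp : p.Prime) (hx : IsPeriodicPt g p x) {s : Finset α} (hs : ∀ i, g^[i] x ∈ s)
    (hcard : s.card < p) : IsFixedPt g x := by
  have := Fact.mk hp
  by_contra hfix
  have hinj : Set.InjOn (g^[·] x) (Finset.range p) := by
    simpa [← minimalPeriod_eq_prime hx hfix] using iterate_injOn_Iio_minimalPeriod (f := g) (x := x)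
  have := Finset.card_le_card_of_injOn _ (fun i _ => hs i) hinj
  rw [Finset.card_range] at this
  omega

theorem MvPolynomial.semiconj_eval_map {R S ι : Type*} [CommSemiring R] [CommSemiring S]
    (φ : R →+* S) (f : ι → MvPolynomial ι R) :
    Semiconj (fun x => φ ∘ x) (fun x i => eval x (f i)) (fun y i => eval y (map φ (f i))) := by
  intro x
  funext i
  change φ (eval x (f i)) = eval (φ ∘ x) (map φ (f i))
  rw [eval_map, eval, coe_eval₂Hom, eval₂_comp_left, RingHom.comp_id]

theorem Int.ModEq.exists_intCast_eq_add_two_pow_mul {a b : ℤ} {k : ℕ} (h : a ≡ b [ZMOD 2 ^ k]) :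
    ∃ e : ZMod 2, (a : ZMod (2 ^ (k + 1))) = ((b + 2 ^ k * e.val : ℤ) : ZMod (2 ^ (k + 1))) := by
  obtain ⟨c, hc⟩ := h.symm.dvd
  refine ⟨c, ?_⟩
  rw [ZMod.intCast_eq_intCast_iff, ZMod.val_intCast, sub_eq_iff_eq_add'.mp hc]
  push_cast
  rw [pow_succ]
  exact ((Int.mod_modEq c 2).symm.mul_left' (c := 2 ^ k)).add_left b

theorem Int.eq_of_forall_modEq_two_pow {a b : ℤ} (h : ∀ k : ℕ, a ≡ b [ZMOD 2 ^ k]) : a = b := by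
  refine (sub_eq_zero.mp (Int.eq_zero_of_dvd_of_natAbs_lt_natAbs (h (b - a).natAbs).dvd ?_)).symm
  simpa [Int.natAbs_pow] using Nat.lt_two_pow_self

theorem isFixedPt_of_isPeriodicPt_of_two_pow_card_lt {ι : Type*} [Fintype ι]
    {G : (ι → ℤ) → (ι → ℤ)}
    (hG : ∀ M : ℕ, ∃ H : (ι → ZMod M) → (ι → ZMod M), Semiconj (fun x => ((↑) : ℤ → ZMod M) ∘ x) G H)
    {p : ℕ} (hp : p.Prime) (hcard : 2 ^ Fintype.card ι < p) {P : ι → ℤ}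
    (hP : IsPeriodicPt G p P) : IsFixedPt G P := by
  classical
  suffices h : ∀ k i t, G^[i] P t ≡ P t [ZMOD 2 ^ k] from
    funext fun t => Int.eq_of_forall_modEq_two_pow fun k => h k 1 t
  intro k
  induction k with
  | zero => simp [Int.modEq_one]
  | succ k ih =>
    obtain ⟨H, hH⟩ := hG (2 ^ (k + 1))
    let s : Finset (ι → ZMod (2 ^ (k + 1))) := Finset.univ.image fun (e : ι → ZMod 2) t =>
      ((P t + 2 ^ k * (e t).val : ℤ) : ZMod (2 ^ (k + 1)))
    have hs : ∀ i, H^[i] (((↑) : ℤ → ZMod _) ∘ P) ∈ s := by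
      intro i
      rw [← hH.iterate_right i P]
      choose e he using fun t => (ih i t).exists_intCast_eq_add_two_pow_mul
      exact Finset.mem_image.mpr ⟨e, Finset.mem_univ _, funext fun t => (he t).symm⟩
    have hs_card : s.card < p :=
      (Finset.card_image_le.trans (by simp [ZMod.card])).trans_lt hcard
    have hfix := (hP.map hH).isFixedPt_of_card_lt hp hs hs_card
    intro i t
    have := congrFun ((hH.iterate_right i P).trans (hfix.iterate i)) t
    simpa [ZMod.intCast_eq_intCast_iff] using this

theorem stmt11_general (N : ℕ)
    (f : Fin N → MvPolynomial (Fin N) ℤ)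
    (F : (Fin N → ℤ) → (Fin N → ℤ))
    (hF : ∀ x, F x = fun i => MvPolynomial.eval x (f i))
    (P : Fin N → ℤ)
    (hP : ∃ k, 0 < k ∧ F^[k] P = P)
    (n : ℕ) (hn : n = Function.minimalPeriod F P) :
    ∀ q : ℕ, q.Prime → 2 ^ N < q → ¬ q ∣ n := by
  rintro q hq hNq ⟨m, rfl⟩
  obtain ⟨k, hk, hkP⟩ := hP
  have hpos : 0 < q * m := hn ▸ IsPeriodicPt.minimalPeriod_pos hk hkP
  have hperiodic : IsPeriodicPt F^[m] q P := by
    rw [IsPeriodicPt, IsFixedPt, ← iterate_mul, mul_comm, hn]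
    exact iterate_minimalPeriod
  have hreduce (M : ℕ) : ∃ H, Semiconj (fun x => ((↑) : ℤ → ZMod M) ∘ x) F^[m] H :=
    ⟨_, (funext hF ▸ MvPolynomial.semiconj_eval_map (Int.castRingHom (ZMod M)) f).iterate_right m⟩
  have hfixed : IsPeriodicPt F m P :=
    isFixedPt_of_isPeriodicPt_of_two_pow_card_lt hreduce hq (by simpa using hNq) hperiodic
  have := Nat.le_of_dvd (Nat.pos_of_mul_pos_left hpos) (hn ▸ hfixed.minimalPeriod_dvd)
  nlinarith [hq.two_le]

/-- No prime `q > 2^N` divides the primitive period of an integral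
periodic point of a polynomial endomorphism of `𝔸^N`. -/
theorem stmt11 (N : ℕ) (hN : 1 ≤ N)
    (f : Fin N → MvPolynomial (Fin N) ℤ)
    (F : (Fin N → ℤ) → (Fin N → ℤ))
    (hF : ∀ x, F x = fun i => MvPolynomial.eval x (f i))
    (P : Fin N → ℤ)
    (hP : ∃ k, 0 < k ∧ F^[k] P = P)
    (n : ℕ) (hn : n = Function.minimalPeriod F P) :
    ∀ q : ℕ, q.Prime → 2 ^ N < q → ¬ q ∣ n :=
  stmt11_general N f F hF P hP n hn
end

section
/- Let N ≥ 1, let F : ℤ^N → ℤ^N be a polynomial endomorphism over ℤ, let p be a prime, and let P ∈ ℤ^N be an F-periodic point with primitive period n. Then for every prime q different from p, q^(ord_q(n)) ≤ p^N · (p^N − 1), where ord_q(n) denotes the q-adic valuation of n. -/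
open MvPolynomial Matrix Finset

namespace Stmt14aux
variable {N : ℕ}

lemma eval_comp (g : MvPolynomial (Fin N) ℤ) (w : Fin N → MvPolynomial (Fin N) ℤ) (x : Fin N → ℤ) :
    MvPolynomial.eval x (MvPolynomial.aeval w g) = MvPolynomial.eval (fun j => MvPolynomial.eval x (w j)) g := by
  induction g using MvPolynomial.induction_on with
  | C a => simp
  | add p q hp hq => simp only [map_add, hp, hq]
  | mul_X p n hp => simp only [_root_.map_mul, aeval_X, eval_mul, eval_X, hp]

lemma dvd_eval_sub (g : MvPolynomial (Fin N) ℤ) (x y : Fin N → ℤ) (d : ℤ)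
    (h : ∀ i, d ∣ x i - y i) : d ∣ MvPolynomial.eval x g - MvPolynomial.eval y g := by
  induction g using MvPolynomial.induction_on with
  | C a => simp
  | add p q hp hq =>
      have := dvd_add hp hq
      simpa [add_sub_add_comm] using this
  | mul_X p n hp =>
      have e : eval x (p * X n) - eval y (p * X n)
          = (eval x p - eval y p) * x n + eval y p * (x n - y n) := by
        simp only [eval_mul, eval_X]; ring
      rw [e]; exact dvd_add (hp.mul_right _) ((h n).mul_left _)

lemma taylor_sq (g : MvPolynomial (Fin N) ℤ) (x v : Fin N → ℤ) (s : ℤ) :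
    s^2 ∣ eval (fun i => x i + s * v i) g - eval x g
      - s * ∑ i, eval x (pderiv i g) * v i := by
  induction g using MvPolynomial.induction_on with
  | C a => simp
  | add g1 g2 h1 h2 =>
      have := dvd_add h1 h2
      have e : eval (fun i => x i + s * v i) (g1 + g2) - eval x (g1 + g2)
          - s * ∑ i, eval x (pderiv i (g1 + g2)) * v i
          = (eval (fun i => x i + s * v i) g1 - eval x g1 - s * ∑ i, eval x (pderiv i g1) * v i)
          + (eval (fun i => x i + s * v i) g2 - eval x g2 - s * ∑ i, eval x (pderiv i g2) * v i) := by
        simp only [map_add, Finset.sum_add_distrib, add_mul, mul_add]; ring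
      rw [e]; exact this
  | mul_X g1 n hg =>
      have hsum : ∑ i, eval x (pderiv i (g1 * X n)) * v i
          = (∑ i, eval x (pderiv i g1) * v i) * x n + eval x g1 * v n := by
        have step : ∀ i, eval x (pderiv i (g1 * X n)) * v i
            = (eval x (pderiv i g1) * v i) * x n + (if n = i then eval x g1 * v i else 0) := by
          intro i
          rw [pderiv_mul]
          by_cases h : n = i
          · subst h; simp [pderiv_X]; ring
          · simp [pderiv_X_of_ne (Ne.symm (h ∘ Eq.symm)), h]
            · ring
        rw [Finset.sum_congr rfl (fun i _ => step i), Finset.sum_add_distrib, Finset.sum_ite_eq]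
        simp [Finset.sum_mul]
      have hlin := dvd_eval_sub g1 (fun i => x i + s * v i) x s (by intro i; simp)
      have e : eval (fun i => x i + s * v i) (g1 * X n) - eval x (g1 * X n)
          - s * ∑ i, eval x (pderiv i (g1 * X n)) * v i
          = (eval (fun i => x i + s * v i) g1 - eval x g1 - s * ∑ i, eval x (pderiv i g1) * v i) * x n
            + (s * v n) * (eval (fun i => x i + s * v i) g1 - eval x g1) := by
        rw [hsum]; simp only [eval_mul, eval_X]; ring
      rw [e]
      refine dvd_add (hg.mul_right _) ?_
      obtain ⟨c, hc⟩ := hlin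
      exact ⟨v n * c, by rw [hc]; ring⟩


noncomputable def iterPolys (f : Fin N → MvPolynomial (Fin N) ℤ) : ℕ → Fin N → MvPolynomial (Fin N) ℤ
  | 0 => fun i => X i
  | s + 1 => fun i => aeval (iterPolys f s) (f i)

lemma iter_eval (f : Fin N → MvPolynomial (Fin N) ℤ) (F : (Fin N → ℤ) → (Fin N → ℤ))
    (hF : ∀ x, F x = fun i => MvPolynomial.eval x (f i)) :
    ∀ (s : ℕ) (x : Fin N → ℤ), F^[s] x = fun i => MvPolynomial.eval x (iterPolys f s i) := by
  intro s
  induction s with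
  | zero => intro x; funext i; simp [iterPolys]
  | succ s ih =>
      intro x
      rw [Function.iterate_succ_apply', ih, hF]
      funext i
      rw [iterPolys, eval_comp]

/-- divisibility is preserved along polynomial maps -/
lemma dvd_iter (g : Fin N → MvPolynomial (Fin N) ℤ) (G : (Fin N → ℤ) → (Fin N → ℤ))
    (hG : ∀ x, G x = fun i => MvPolynomial.eval x (g i)) :
    ∀ (s : ℕ) (d : ℤ) (X Y : Fin N → ℤ), (∀ c, d ∣ X c - Y c) →
      ∀ c, d ∣ (G^[s] X) c - (G^[s] Y) c := by
  intro s
  induction s with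
  | zero => intro d X Y h c; simpa using h c
  | succ s ih =>
      intro d X Y h c
      rw [Function.iterate_succ_apply', Function.iterate_succ_apply', hG (G^[s] X), hG (G^[s] Y)]
      exact dvd_eval_sub (g c) _ _ d (ih d X Y h)

/-- the Jacobian matrix of a polynomial map at a point -/
noncomputable def jacAt (g : Fin N → MvPolynomial (Fin N) ℤ) (Q : Fin N → ℤ) :
    Matrix (Fin N) (Fin N) ℤ := Matrix.of fun i j => MvPolynomial.eval Q (pderiv j (g i))

lemma taylor_step {p : ℕ} (hp : 2 ≤ p) {k : ℕ} (hk : 1 ≤ k)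
    (g : Fin N → MvPolynomial (Fin N) ℤ) (Q w : Fin N → ℤ) (c : Fin N) :
    ((p : ℤ)) ^ (k + 1) ∣ MvPolynomial.eval (fun c' => Q c' + (p:ℤ)^k * w c') (g c)
      - MvPolynomial.eval Q (g c) - (p:ℤ)^k * ((jacAt g Q) *ᵥ w) c := by
  have h1 := taylor_sq (g c) Q w ((p:ℤ)^k)
  have h2 : ((p:ℤ))^(k+1) ∣ ((p:ℤ)^k)^2 := by
    rw [← pow_mul]
    exact pow_dvd_pow _ (by omega)
  have h3 : ((jacAt g Q) *ᵥ w) c = ∑ i, MvPolynomial.eval Q (pderiv i (g c)) * w i := by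
    simp [jacAt, Matrix.mulVec, dotProduct]
  rw [h3]
  exact dvd_trans h2 h1

lemma jac_congr {p : ℕ} (g : Fin N → MvPolynomial (Fin N) ℤ) (Q P w : Fin N → ℤ)
    (hQ : ∀ c, (p:ℤ) ∣ Q c - P c) (c : Fin N) :
    (p:ℤ) ∣ ((jacAt g Q) *ᵥ w) c - ((jacAt g P) *ᵥ w) c := by
  have : ((jacAt g Q) *ᵥ w) c - ((jacAt g P) *ᵥ w) c
      = ∑ j, (MvPolynomial.eval Q (pderiv j (g c)) - MvPolynomial.eval P (pderiv j (g c))) * w j := by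
    simp [jacAt, Matrix.mulVec, dotProduct, ← Finset.sum_sub_distrib]
    congr 1; funext j; ring
  rw [this]
  exact Finset.dvd_sum fun j _ => ((dvd_eval_sub _ _ _ _ hQ).mul_right _)

/-- first-order expansion of iterates around a mod-p periodic point -/
lemma Ckj {p : ℕ} (hp : 2 ≤ p) {k : ℕ} (hk : 1 ≤ k)
    (g : Fin N → MvPolynomial (Fin N) ℤ) (G : (Fin N → ℤ) → (Fin N → ℤ))
    (hG : ∀ x, G x = fun i => MvPolynomial.eval x (g i))
    (P : Fin N → ℤ) (hQ : ∀ (j : ℕ) (c : Fin N), (p:ℤ) ∣ (G^[j] P) c - P c) :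
    ∀ (j : ℕ) (v : Fin N → ℤ) (c : Fin N),
      ((p : ℤ)) ^ (k + 1) ∣ (G^[j] (fun c' => P c' + (p:ℤ)^k * v c')) c - (G^[j] P) c
        - (p:ℤ)^k * (((jacAt g P) ^ j) *ᵥ v) c := by
  intro j
  induction j with
  | zero =>
      intro v c
      simp [Matrix.one_mulVec]
  | succ j ih =>
      intro v c
      set X : Fin N → ℤ := fun c' => P c' + (p:ℤ)^k * v c' with hX
      set Yj := G^[j] X with hYj
      set Qj := G^[j] P with hQj
      set wj := ((jacAt g P) ^ j) *ᵥ v with hwj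
      set Y' : Fin N → ℤ := fun c' => Qj c' + (p:ℤ)^k * wj c' with hY'
      have ih' : ∀ c', ((p:ℤ))^(k+1) ∣ Yj c' - Y' c' := by
        intro c'
        have := ih v c'
        simpa [hY', sub_sub] using this
      have h1 : ((p:ℤ))^(k+1) ∣ (G Yj) c - (G Y') c := by
        have := dvd_iter g G hG 1 ((p:ℤ)^(k+1)) Yj Y' ih' c
        simpa using this
      have h2 : ((p:ℤ))^(k+1) ∣ (G Y') c - (G Qj) c - (p:ℤ)^k * ((jacAt g Qj) *ᵥ wj) c := by
        rw [hG Y', hG Qj]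
        exact taylor_step hp hk g Qj wj c
      have h3 : ((p:ℤ))^(k+1) ∣ (p:ℤ)^k * (((jacAt g Qj) *ᵥ wj) c - ((jacAt g P) *ᵥ wj) c) := by
        rw [pow_succ]
        exact mul_dvd_mul_left _ (jac_congr g Qj P wj (fun c' => hQ j c') c)
      have hfin : ((jacAt g P) ^ (j+1)) *ᵥ v = (jacAt g P) *ᵥ wj := by
        rw [hwj, Matrix.mulVec_mulVec, ← pow_succ']
      have e : (G^[j+1] X) c - (G^[j+1] P) c - (p:ℤ)^k * (((jacAt g P) ^ (j+1)) *ᵥ v) c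
          = ((G Yj) c - (G Y') c)
            + ((G Y') c - (G Qj) c - (p:ℤ)^k * ((jacAt g Qj) *ᵥ wj) c)
            + (p:ℤ)^k * (((jacAt g Qj) *ᵥ wj) c - ((jacAt g P) *ᵥ wj) c) := by
        rw [Function.iterate_succ_apply', Function.iterate_succ_apply', hfin, ← hYj, ← hQj]
        ring
      rw [e]
      exact dvd_add (dvd_add h1 h2) h3

/-- expansion of the return map at level `p^k` -/
lemma LLj {p : ℕ} (hp : 2 ≤ p) {k : ℕ} (hk : 1 ≤ k)
    (g : Fin N → MvPolynomial (Fin N) ℤ) (G : (Fin N → ℤ) → (Fin N → ℤ))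
    (hG : ∀ x, G x = fun i => MvPolynomial.eval x (g i))
    (P : Fin N → ℤ) (hQ : ∀ (j : ℕ) (c : Fin N), (p:ℤ) ∣ (G^[j] P) c - P c)
    (M : ℕ) (u : Fin N → ℤ) (hu : ∀ c, (p:ℤ)^k * u c = (G^[M] P) c - P c) :
    ∀ (j : ℕ) (c : Fin N),
      ((p:ℤ)) ^ (k + 1) ∣ (G^[M * j] P) c - P c
        - (p:ℤ)^k * ((∑ i ∈ Finset.range j, ((jacAt g P) ^ M) ^ i) *ᵥ u) c := by
  intro j
  induction j with
  | zero => intro c; simp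
  | succ j ih =>
      intro c
      set SS := ∑ i ∈ Finset.range j, ((jacAt g P) ^ M) ^ i with hSS
      set X := G^[M * j] P with hXdef
      set Y' : Fin N → ℤ := fun c' => P c' + (p:ℤ)^k * (SS *ᵥ u) c' with hY'
      have ih' : ∀ c', ((p:ℤ))^(k+1) ∣ X c' - Y' c' := by
        intro c'
        have := ih c'
        simpa [hY', sub_sub] using this
      have h1 : ∀ c', ((p:ℤ))^(k+1) ∣ (G^[M] X) c' - (G^[M] Y') c' :=
        dvd_iter g G hG M _ X Y' ih'
      have h2 : ((p:ℤ))^(k+1) ∣ (G^[M] Y') c - (G^[M] P) c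
          - (p:ℤ)^k * (((jacAt g P) ^ M) *ᵥ (SS *ᵥ u)) c :=
        Ckj hp hk g G hG P hQ M (SS *ᵥ u) c
      have hgeom : (∑ i ∈ Finset.range (j+1), ((jacAt g P) ^ M) ^ i) *ᵥ u
          = (((jacAt g P) ^ M) *ᵥ (SS *ᵥ u)) + u := by
        rw [geom_sum_succ, Matrix.add_mulVec, Matrix.one_mulVec, Matrix.mulVec_mulVec, ← hSS]
      have estep : G^[M * (j+1)] P = G^[M] X := by
        rw [hXdef, ← Function.iterate_add_apply]
        congr 1
        ring
      have e : (G^[M * (j+1)] P) c - P c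
            - (p:ℤ)^k * ((∑ i ∈ Finset.range (j+1), ((jacAt g P) ^ M) ^ i) *ᵥ u) c
          = ((G^[M] X) c - (G^[M] Y') c)
            + ((G^[M] Y') c - (G^[M] P) c - (p:ℤ)^k * (((jacAt g P) ^ M) *ᵥ (SS *ᵥ u)) c)
            + ((G^[M] P) c - P c - (p:ℤ)^k * u c) := by
        rw [estep, hgeom]
        simp only [Pi.add_apply]
        ring
      rw [e]
      refine dvd_add (dvd_add (h1 c) h2) ?_
      rw [hu c]
      simp

/-- Eventual period of matrix powers, with bound `p^N - 1`. -/
lemma ORD {p N : ℕ} (hp : p.Prime) (hN : 1 ≤ N) (A : Matrix (Fin N) (Fin N) (ZMod p)) :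
    ∃ r s₀ : ℕ, 0 < r ∧ r ≤ p ^ N - 1 ∧ ∀ x, s₀ ≤ x → A ^ (x + r) = A ^ x := by
  haveI : Fact p.Prime := ⟨hp⟩
  -- the set of eventual periods
  have hex : ∃ d : ℕ, 0 < d ∧ ∃ s, ∀ x, s ≤ x → A ^ (x + d) = A ^ x := by
    obtain ⟨i, j, hij, hpow⟩ : ∃ i j : ℕ, i ≠ j ∧ A ^ i = A ^ j :=
      Finite.exists_ne_map_eq_of_infinite (fun n : ℕ => A ^ n)
    rcases hij.lt_or_gt with h | h
    · exact ⟨j - i, by omega, i, fun x hx => by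
        have : A ^ (x + (j - i)) = A ^ (x - i) * A ^ j := by
          rw [← pow_add]; congr 1; omega
        rw [this, ← hpow, ← pow_add]; congr 1; omega⟩
    · exact ⟨i - j, by omega, j, fun x hx => by
        have : A ^ (x + (i - j)) = A ^ (x - j) * A ^ i := by
          rw [← pow_add]; congr 1; omega
        rw [this, hpow, ← pow_add]; congr 1; omega⟩
  classical
  set r := Nat.find hex with hr_def
  obtain ⟨hrpos, s₀, hstab⟩ := Nat.find_spec hex
  refine ⟨r, s₀, hrpos, ?_, hstab⟩
  have hpN : 2 ≤ p ^ N := by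
    calc 2 ≤ p := hp.two_le
    _ = p ^ 1 := (pow_one p).symm
    _ ≤ p ^ N := Nat.pow_le_pow_right hp.pos hN
  by_cases hz : ∃ x, A ^ x = 0
  · -- some power is zero: r = 1
    obtain ⟨x, hx⟩ := hz
    have h1 : r ≤ 1 := Nat.find_min' hex ⟨one_pos, x, fun y hy => by
      have hy0 : A ^ y = 0 := by
        have : A ^ y = A ^ (y - x) * A ^ x := by rw [← pow_add]; congr 1; omega
        rw [this, hx, mul_zero]
      have : A ^ (y + 1) = 0 := by
        have : A ^ (y + 1) = A ^ 1 * A ^ y := by rw [← pow_add]; congr 1; omega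
        rw [this, hy0, mul_zero]
      rw [this, hy0]⟩
    omega
  · push_neg at hz
    -- span of powers
    set Sp : Submodule (ZMod p) (Matrix (Fin N) (Fin N) (ZMod p)) :=
      Submodule.span (ZMod p) (Set.range fun i : Fin N => A ^ (i : ℕ)) with hSp
    have hmem : ∀ x : ℕ, A ^ x ∈ Sp := by
      intro x
      induction x using Nat.strong_induction_on with
      | _ x ih =>
        by_cases hx : x < N
        · exact Submodule.subset_span ⟨⟨x, hx⟩, rfl⟩
        · push_neg at hx
          have hch := Matrix.aeval_self_charpoly A
          have hdeg : A.charpoly.natDegree = N := by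
            rw [Matrix.charpoly_natDegree_eq_dim, Fintype.card_fin]
          have hsum := Polynomial.aeval_eq_sum_range (R := ZMod p) (p := A.charpoly) A
          rw [hch, hdeg] at hsum
          have hco : A.charpoly.coeff N = 1 := by
            have := (Matrix.charpoly_monic A).coeff_natDegree
            rwa [hdeg] at this
          rw [Finset.sum_range_succ, hco, one_smul] at hsum
          have hAN : A ^ N = -∑ i ∈ Finset.range N, A.charpoly.coeff i • A ^ i :=
            eq_neg_of_add_eq_zero_right hsum.symm
          have hx' : A ^ x = A ^ (x - N) * A ^ N := by rw [← pow_add]; congr 1; omega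
          rw [hx', hAN, mul_neg, Finset.mul_sum]
          refine Submodule.neg_mem _ (Submodule.sum_mem _ fun i hi => ?_)
          rw [mul_smul_comm, ← pow_add]
          have hlt : x - N + i < x := by
            have := Finset.mem_range.mp hi; omega
          exact Submodule.smul_mem _ _ (ih _ hlt)
    haveI : Fintype ↥Sp := Fintype.ofFinite _
    -- card Sp ≤ p ^ N
    have hcard : Fintype.card ↥Sp ≤ p ^ N := by
      have hsurj : Function.Surjective
          (fun c : Fin N → ZMod p => (⟨∑ i, c i • A ^ (i : ℕ),
            Submodule.sum_mem _ fun i _ => Submodule.smul_mem _ _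
              (Submodule.subset_span ⟨i, rfl⟩)⟩ : ↥Sp)) := by
        rintro ⟨X, hX⟩
        rw [hSp] at hX
        obtain ⟨c, hc⟩ := (Submodule.mem_span_range_iff_exists_fun (ZMod p)).mp hX
        exact ⟨c, Subtype.ext hc⟩
      calc Fintype.card ↥Sp ≤ Fintype.card (Fin N → ZMod p) :=
            Fintype.card_le_of_surjective _ hsurj
      _ = p ^ N := by simp [ZMod.card]
    -- injective map Fin r → Sp avoiding 0
    have hinj : Function.Injective (fun i : Fin r => (⟨A ^ (s₀ + (i : ℕ)), hmem _⟩ : ↥Sp)) := by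
      intro a b hab
      simp only [Subtype.mk.injEq] at hab
      by_contra hne
      have key : ∀ a b : Fin r, (a : ℕ) < (b : ℕ) → A ^ (s₀ + (a:ℕ)) = A ^ (s₀ + (b:ℕ)) → False := by
        intro a b hlt heq
        have hd : (0 : ℕ) < (b : ℕ) - (a : ℕ) := by omega
        have : (b : ℕ) - (a : ℕ) ∈ {d : ℕ | 0 < d ∧ ∃ s, ∀ x, s ≤ x → A ^ (x + d) = A ^ x} := by
          refine ⟨hd, s₀ + (a : ℕ), fun x hx => ?_⟩
          have e1 : A ^ (x + ((b:ℕ) - (a:ℕ))) = A ^ (x - (s₀ + (a:ℕ))) * A ^ (s₀ + (b:ℕ)) := by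
            rw [← pow_add]; congr 1; omega
          rw [e1, ← heq, ← pow_add]; congr 1; omega
        have hfind := Nat.find_min hex (m := (b:ℕ) - (a:ℕ)) (by
          have : (b : ℕ) < r := b.isLt
          omega)
        exact hfind this
      rcases Ne.lt_or_gt (fun h : (a:ℕ) = (b:ℕ) => hne (Fin.ext h)) with h | h
      · exact key a b h hab
      · exact key b a h hab.symm
    have hnot0 : (⟨0, Submodule.zero_mem _⟩ : ↥Sp) ∉ Set.range
        (fun i : Fin r => (⟨A ^ (s₀ + (i : ℕ)), hmem _⟩ : ↥Sp)) := by
      rintro ⟨i, hi⟩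
      exact hz _ (congrArg Subtype.val hi)
    have := Fintype.card_lt_of_injective_of_notMem _ hinj hnot0
    rw [Fintype.card_fin] at this
    omega


lemma AFF {p N : ℕ} (hp : p.Prime) (A : Matrix (Fin N) (Fin N) (ZMod p))
    (u : Fin N → ZMod p) (M ℓ r s₀ : ℕ) (hM : 0 < M) (hr : 0 < r)
    (hstab : ∀ x, s₀ ≤ x → A ^ (x + r) = A ^ x) (hMr : M ∣ r) (hℓp : ¬ p ∣ ℓ)
    (hchar : ∀ j : ℕ, ((∑ i ∈ Finset.range j, (A ^ M) ^ i) *ᵥ u = 0) ↔ ℓ ∣ j) :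
    M * ℓ ∣ r := by
  haveI : Fact p.Prime := ⟨hp⟩
  set B := A ^ M with hB
  set r' := r / M with hr'def
  have hrr : M * r' = r := Nat.mul_div_cancel' hMr
  have hr' : 0 < r' := Nat.div_pos (Nat.le_of_dvd hr hMr) hM
  have hℓ0 : 0 < ℓ := by
    rcases Nat.eq_zero_or_pos ℓ with h | h
    · exact absurd (h ▸ dvd_zero p) hℓp
    · exact h
  set s := r * (s₀ + 1) with hs_def
  set E := A ^ s with hE
  have hss₀ : s₀ ≤ s := by
    have : s₀ + 1 ≤ r * (s₀ + 1) := Nat.le_mul_of_pos_left _ hr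
    omega
  have f1 : ∀ x c : ℕ, s₀ ≤ x → A ^ (x + c * r) = A ^ x := by
    intro x c hx
    induction c with
    | zero => simp
    | succ c ih =>
        have : x + (c + 1) * r = (x + c * r) + r := by ring
        rw [this, hstab _ (by omega), ih]
  have f2 : ∀ x, s₀ ≤ x → E * A ^ x = A ^ x := by
    intro x hx
    rw [hE, ← pow_add]
    have : s + x = x + (s₀ + 1) * r := by rw [hs_def]; ring
    rw [this, f1 _ _ hx]
  have f3 : ∀ x, s₀ ≤ x → E * B ^ x = B ^ x := by
    intro x hx
    rw [hB, ← pow_mul]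
    exact f2 _ (le_trans hx (Nat.le_mul_of_pos_left _ hM))
  have f4 : ∀ h : ℕ, E * B ^ (r' * h) = E := by
    intro h
    rw [hB, ← pow_mul, hE, ← pow_add]
    have : s + M * (r' * h) = s + h * r := by rw [← hrr]; ring
    rw [this, f1 _ _ hss₀]
  set S : ℕ → Matrix (Fin N) (Fin N) (ZMod p) := fun j => ∑ i ∈ Finset.range j, B ^ i with hS
  have Sadd : ∀ x y : ℕ, S (x + y) = S x + B ^ x * S y := by
    intro x y
    induction y with
    | zero => simp [hS]
    | succ y ih =>
        have : x + (y + 1) = (x + y) + 1 := by ring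
        rw [this]
        simp only [hS] at ih ⊢
        rw [Finset.sum_range_succ, ih, Finset.sum_range_succ, mul_add, ← pow_add, add_assoc]
  have f5 : ∀ a b : ℕ, S (a * b) = (∑ h ∈ Finset.range b, B ^ (a * h)) * S a := by
    intro a b
    induction b with
    | zero => simp [hS]
    | succ b ih =>
        rw [Nat.mul_succ, Sadd, ih, Finset.sum_range_succ, add_mul]
  have f6 : ∀ c : ℕ, E * S (r' * c) = (c : ZMod p) • (E * S r') := by
    intro c
    have hEc : E * (∑ h ∈ Finset.range c, B ^ (r' * h)) = (c : ZMod p) • E := by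
      rw [Finset.mul_sum, Finset.sum_congr rfl (fun h _ => f4 h), Finset.sum_const,
        Finset.card_range, ← Nat.cast_smul_eq_nsmul (ZMod p)]
    rw [f5, ← mul_assoc, hEc, smul_mul_assoc]
  have f7 : ∀ j, s₀ ≤ j → S j - E * S j = S s₀ - E * S s₀ := by
    intro j hj
    induction j, hj using Nat.le_induction with
    | base => rfl
    | succ j hj ih =>
        have e1 : S (j + 1) = S j + B ^ j := by
          simp only [hS]; rw [Finset.sum_range_succ]
        rw [e1, mul_add, f3 _ hj]
        have e2 : S j + B ^ j - (E * S j + B ^ j) = S j - E * S j := by abel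
        rw [e2]; exact ih
  have hppow : s₀ < p ^ (s₀ + 1) := by
    calc s₀ < 2 ^ (s₀ + 1) := by
          have := Nat.lt_two_pow_self (n := s₀); omega
    _ ≤ p ^ (s₀ + 1) := Nat.pow_le_pow_left hp.two_le _
  have hj₁s : s₀ ≤ r' * (ℓ * p ^ (s₀ + 1)) := by
    have h1 : p ^ (s₀ + 1) ≤ ℓ * p ^ (s₀ + 1) := Nat.le_mul_of_pos_left _ hℓ0
    have h2 : ℓ * p ^ (s₀ + 1) ≤ r' * (ℓ * p ^ (s₀ + 1)) := Nat.le_mul_of_pos_left _ hr'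
    omega
  have hj₂s : s₀ ≤ r' * p ^ (s₀ + 1) := by
    have h2 : p ^ (s₀ + 1) ≤ r' * p ^ (s₀ + 1) := Nat.le_mul_of_pos_left _ hr'
    omega
  have hpdvd : ∀ c : ℕ, p ∣ c → E * S (r' * c) = 0 := by
    intro c hc
    rw [f6]
    have : (c : ZMod p) = 0 := (ZMod.natCast_eq_zero_iff c p).mpr hc
    rw [this, zero_smul]
  -- tail vanishes on u
  have g1 : S (r' * (ℓ * p ^ (s₀ + 1))) *ᵥ u = 0 :=
    (hchar _).mpr ⟨r' * p ^ (s₀ + 1), by ring⟩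
  have g2 : E * S (r' * (ℓ * p ^ (s₀ + 1))) = 0 :=
    hpdvd _ ⟨ℓ * p ^ s₀, by ring⟩
  have gT : (S s₀ - E * S s₀) *ᵥ u = 0 := by
    rw [← f7 _ hj₁s, Matrix.sub_mulVec, g1, g2, Matrix.zero_mulVec, sub_zero]
  have g5 : S (r' * p ^ (s₀ + 1)) *ᵥ u = 0 := by
    have hdec : S (r' * p ^ (s₀ + 1))
        = (S s₀ - E * S s₀) + E * S (r' * p ^ (s₀ + 1)) := by
      rw [← f7 _ hj₂s, sub_add_cancel]
    rw [hdec, Matrix.add_mulVec, gT, hpdvd _ ⟨p ^ s₀, by ring⟩, Matrix.zero_mulVec, add_zero]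
  have g6 : ℓ ∣ r' * p ^ (s₀ + 1) := (hchar _).mp g5
  have hcop : Nat.Coprime ℓ (p ^ (s₀ + 1)) :=
    (Nat.Prime.coprime_iff_not_dvd hp).mpr hℓp |>.symm |>.pow_right _
  have : ℓ ∣ r' := hcop.dvd_of_dvd_mul_right g6
  calc M * ℓ ∣ M * r' := Nat.mul_dvd_mul_left M this
  _ = r := hrr


lemma core {N p q e : ℕ} (hN : 1 ≤ N) (hp : p.Prime) (hq : q.Prime) (hqp : q ≠ p)
    (hh : Fin N → MvPolynomial (Fin N) ℤ) (H : (Fin N → ℤ) → (Fin N → ℤ))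
    (hH : ∀ x, H x = fun i => MvPolynomial.eval x (hh i))
    (P : Fin N → ℤ) (ht : H^[q ^ e] P = P)
    (hmin : ∀ j, 0 < j → H^[j] P = P → q ^ e ∣ j) :
    q ^ e ≤ p ^ N * (p ^ N - 1) := by
  classical
  haveI : Fact p.Prime := ⟨hp⟩
  set t := q ^ e with htdef
  have ht0 : 0 < t := pow_pos hq.pos e
  have hp2 : 2 ≤ p := hp.two_le
  set Z : ℕ → ℕ → Prop := fun k j => ∀ c, ((p:ℤ))^k ∣ (H^[j] P) c - P c with hZdef
  have dvdH := dvd_iter hh H hH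
  have zt : ∀ k, Z k t := by
    intro k c; rw [ht]; simp
  have zmul : ∀ k j a, Z k j → Z k (j * a) := by
    intro k j a hj
    induction a with
    | zero => intro c; simp
    | succ a ih =>
        intro c
        have h1 := dvdH (j * a) ((p:ℤ)^k) (H^[j] P) P (fun c' => hj c') c
        rw [← Function.iterate_add_apply] at h1
        have e1 : j * a + j = j * (a + 1) := by ring
        rw [e1] at h1
        have e2 : (H^[j * (a+1)] P) c - P c
            = ((H^[j * (a+1)] P) c - (H^[j * a] P) c) + ((H^[j * a] P) c - P c) := by ring
        rw [e2]
        exact dvd_add h1 (ih c)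
  have hZex : ∀ k, ∃ j, 0 < j ∧ Z k j := fun k => ⟨t, ht0, zt k⟩
  set nk : ℕ → ℕ := fun k => Nat.find (hZex k) with hnk
  have nk_pos : ∀ k, 0 < nk k := fun k => (Nat.find_spec (hZex k)).1
  have nkZ : ∀ k, Z k (nk k) := fun k => (Nat.find_spec (hZex k)).2
  have nk_dvd : ∀ k j, Z k j → nk k ∣ j := by
    intro k j hj
    have hmul : Z k (nk k * (j / nk k)) := zmul k _ _ (nkZ k)
    have hrem : Z k (j % nk k) := by
      intro c
      have h2 := dvdH (j % nk k) ((p:ℤ)^k) (H^[nk k * (j / nk k)] P) P (fun c' => hmul c') c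
      rw [← Function.iterate_add_apply] at h2
      have e1 : j % nk k + nk k * (j / nk k) = j := Nat.mod_add_div j (nk k)
      rw [e1] at h2
      have e2 : (H^[j % nk k] P) c - P c
          = ((H^[j] P) c - P c) - ((H^[j] P) c - (H^[j % nk k] P) c) := by ring
      rw [e2]
      exact dvd_sub (hj c) h2
    rcases Nat.eq_zero_or_pos (j % nk k) with h0 | hpos
    · exact Nat.dvd_of_mod_eq_zero h0
    · exact absurd ⟨hpos, hrem⟩ (Nat.find_min (hZex k) (Nat.mod_lt j (nk_pos k)))
  have nk_dvd_t : ∀ k, nk k ∣ t := fun k => nk_dvd k t (zt k)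
  have nk_mono : ∀ k, nk k ∣ nk (k+1) :=
    fun k => nk_dvd k _ (fun c => dvd_trans (pow_dvd_pow _ (Nat.le_succ k)) (nkZ (k+1) c))
  set m := nk 1 with hmdef
  have hm_dvd : ∀ k, 1 ≤ k → m ∣ nk k :=
    fun k hk => nk_dvd 1 _ (fun c => dvd_trans (pow_dvd_pow _ hk) (nkZ k c))
  have hmt : m ∣ t := nk_dvd_t 1
  have hm0 : 0 < m := nk_pos 1
  -- pigeonhole bound m ≤ p ^ N
  have hm_le : m ≤ p ^ N := by
    have key : ∀ a b : ℕ, a ≤ b → b < m →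
        (∀ c, (((H^[a] P) c : ZMod p)) = ((H^[b] P) c : ZMod p)) → a = b := by
      intro a b hab hbm hcast
      have hbt : b ≤ t := le_trans (le_of_lt hbm) (Nat.le_of_dvd ht0 hmt)
      have hdvd1 : ∀ c, (p:ℤ) ∣ (H^[b] P) c - (H^[a] P) c := by
        intro c
        have hc0 : (((H^[b] P) c - (H^[a] P) c : ℤ) : ZMod p) = 0 := by
          push_cast
          rw [hcast c]
          ring
        exact (ZMod.intCast_zmod_eq_zero_iff_dvd _ p).mp hc0
      have h2 : ∀ c, (p:ℤ) ∣ (H^[t - b + a] P) c - P c := by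
        intro c
        have h3 := dvdH (t - b) ((p:ℤ)) (H^[b] P) (H^[a] P) hdvd1 c
        rw [← Function.iterate_add_apply, ← Function.iterate_add_apply] at h3
        have e1 : t - b + b = t := by omega
        rw [e1, ht] at h3
        exact dvd_sub_comm.mp h3
      have hZ1 : Z 1 (t - b + a) := by intro c; simpa using h2 c
      have hdvd_m1 : m ∣ t - b + a := nk_dvd 1 _ hZ1
      have hsub : m ∣ b - a := by
        have hx := Nat.dvd_sub hmt hdvd_m1
        rwa [show t - (t - b + a) = b - a by omega] at hx
      rcases Nat.eq_zero_or_pos (b - a) with h0 | hpos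
      · omega
      · have := Nat.le_of_dvd hpos hsub; omega
    have hinj : Function.Injective (fun i : Fin m => fun c => (((H^[(i:ℕ)] P) c : ZMod p))) := by
      intro a b hab
      have h := fun c => congrFun hab c
      rcases le_total (a:ℕ) (b:ℕ) with h1 | h1
      · exact Fin.ext (key a b h1 b.isLt h)
      · exact (Fin.ext (key b a h1 a.isLt (fun c => (h c).symm))).symm
    have hcard := Fintype.card_le_of_injective _ hinj
    simpa [Fintype.card_fun, ZMod.card] using hcard
  -- Jacobian setup
  set gm := iterPolys hh m with hgmdef
  set G : (Fin N → ℤ) → (Fin N → ℤ) := H^[m] with hGdef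
  have hG : ∀ x, G x = fun i => MvPolynomial.eval x (gm i) := fun x => iter_eval hh H hH m x
  have hGiter : ∀ s : ℕ, G^[s] = H^[m * s] := by
    intro s; rw [hGdef, ← Function.iterate_mul]
  have hQ : ∀ (j : ℕ) (c : Fin N), (p:ℤ) ∣ (G^[j] P) c - P c := by
    intro j c
    have hz : Z 1 (m * j) := zmul 1 m j (nkZ 1)
    have h := hz c
    rw [hGiter j]
    simpa using h
  set Aℤ := jacAt gm P with hAdef
  set φM : Matrix (Fin N) (Fin N) ℤ →+* Matrix (Fin N) (Fin N) (ZMod p) := (Int.castRingHom (ZMod p)).mapMatrix with hφM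
  set Abar := φM Aℤ with hAbar
  obtain ⟨r, s₀, hr_pos, hr_le, hstab⟩ := ORD hp hN Abar
  -- main induction on levels
  have main : ∀ k, 1 ≤ k → nk k ∣ m * r := by
    intro k hk
    induction k, hk using Nat.le_induction with
    | base => exact dvd_mul_right m r
    | succ k hk ih =>
      set Mk := nk k / m with hMkdef
      have hMk : m * Mk = nk k := Nat.mul_div_cancel' (hm_dvd k hk)
      have hMk0 : 0 < Mk := by
        rcases Nat.eq_zero_or_pos Mk with h0 | h
        · rw [h0, Nat.mul_zero] at hMk
          exact absurd hMk.symm (nk_pos k).ne'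
        · exact h
      have hMkr : Mk ∣ r := by
        have h1 : m * Mk ∣ m * r := by rw [hMk]; exact ih
        exact (mul_dvd_mul_iff_left (by omega : m ≠ 0)).mp h1
      set u : Fin N → ℤ := fun c => ((H^[nk k] P) c - P c) / ((p:ℤ))^k with hudef
      have hu : ∀ c, ((p:ℤ))^k * u c = (G^[Mk] P) c - P c := by
        intro c
        rw [hGiter Mk, hMk]
        exact Int.mul_ediv_cancel' (nkZ k c)
      have hLL := LLj hp2 hk gm G hG P hQ Mk u hu
      have hidx : ∀ j : ℕ, G^[Mk * j] P = H^[nk k * j] P := by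
        intro j
        rw [hGiter, show m * (Mk * j) = nk k * j by rw [← hMk]; ring]
      set ubar : Fin N → ZMod p := fun c => ((u c : ZMod p)) with hubar
      have hcomp : ∀ (S : Matrix (Fin N) (Fin N) ℤ) (c : Fin N),
          ((φM S) *ᵥ ubar) c = (((S *ᵥ u) c : ℤ) : ZMod p) := by
        intro S c
        simp only [Matrix.mulVec, dotProduct, hφM, RingHom.mapMatrix_apply,
          Matrix.map_apply, Int.coe_castRingHom, hubar]
        push_cast
        rfl
      have hmapS : ∀ j : ℕ, (∑ i ∈ Finset.range j, (Abar ^ Mk) ^ i)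
          = φM (∑ i ∈ Finset.range j, (Aℤ ^ Mk) ^ i) := by
        intro j
        rw [map_sum]
        refine Finset.sum_congr rfl fun i _ => ?_
        rw [hAbar, ← map_pow, ← map_pow]
      have bridge : ∀ j : ℕ,
          ((∑ i ∈ Finset.range j, (Abar ^ Mk) ^ i) *ᵥ ubar = 0)
          ↔ ∀ c, (p:ℤ) ∣ ((∑ i ∈ Finset.range j, (Aℤ ^ Mk) ^ i) *ᵥ u) c := by
        intro j
        rw [hmapS j]
        constructor
        · intro h0 c
          have hc := congrFun h0 c
          rw [hcomp _ c] at hc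
          exact (ZMod.intCast_zmod_eq_zero_iff_dvd _ p).mp hc
        · intro hd
          funext c
          rw [hcomp _ c]
          show _ = (0 : ZMod p)
          exact (ZMod.intCast_zmod_eq_zero_iff_dvd _ p).mpr (hd c)
      set ℓ := nk (k+1) / nk k with hℓdef
      have hℓ : nk k * ℓ = nk (k+1) := Nat.mul_div_cancel' (nk_mono k)
      have hchar : ∀ j : ℕ,
          ((∑ i ∈ Finset.range j, (Abar ^ Mk) ^ i) *ᵥ ubar = 0) ↔ ℓ ∣ j := by
        intro j
        rw [bridge j]
        constructor
        · intro hd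
          have hz : Z (k+1) (nk k * j) := by
            intro c
            have h1 := hLL j c
            rw [hidx j] at h1
            have h2 : ((p:ℤ))^(k+1) ∣ (p:ℤ)^k * ((∑ i ∈ Finset.range j, (Aℤ ^ Mk) ^ i) *ᵥ u) c := by
              rw [pow_succ]
              exact mul_dvd_mul_left _ (hd c)
            have h3 := dvd_add h1 h2
            have e2 : (H^[nk k * j] P) c - P c
                = ((H^[nk k * j] P) c - P c
                  - (p:ℤ)^k * ((∑ i ∈ Finset.range j, (Aℤ ^ Mk) ^ i) *ᵥ u) c)
                  + (p:ℤ)^k * ((∑ i ∈ Finset.range j, (Aℤ ^ Mk) ^ i) *ᵥ u) c := by ring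
            rw [e2]
            exact h3
          have hdv := nk_dvd (k+1) _ hz
          rw [← hℓ] at hdv
          exact (mul_dvd_mul_iff_left (nk_pos k).ne').mp hdv
        · intro hj c
          obtain ⟨d, hd⟩ := hj
          have hz : Z (k+1) (nk k * j) := by
            have e3 : nk k * j = nk (k+1) * d := by rw [← hℓ, hd]; ring
            rw [e3]
            exact zmul (k+1) _ d (nkZ (k+1))
          have h1 := hLL j c
          rw [hidx j] at h1
          have h2 := hz c
          have h3 : ((p:ℤ))^(k+1) ∣ (p:ℤ)^k * ((∑ i ∈ Finset.range j, (Aℤ ^ Mk) ^ i) *ᵥ u) c := by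
            have h4 := dvd_sub h2 h1
            have e4 : ((H^[nk k * j] P) c - P c)
                - ((H^[nk k * j] P) c - P c
                  - (p:ℤ)^k * ((∑ i ∈ Finset.range j, (Aℤ ^ Mk) ^ i) *ᵥ u) c)
                = (p:ℤ)^k * ((∑ i ∈ Finset.range j, (Aℤ ^ Mk) ^ i) *ᵥ u) c := by ring
            rwa [e4] at h4
          rw [pow_succ] at h3
          have hpne : ((p:ℤ))^k ≠ 0 := pow_ne_zero k (by exact_mod_cast hp.pos.ne')
          exact (mul_dvd_mul_iff_left hpne).mp h3
      have hℓdvdt : ℓ ∣ t := dvd_trans ⟨nk k, by rw [← hℓ]; ring⟩ (nk_dvd_t (k+1))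
      have hℓp : ¬ (p ∣ ℓ) := by
        intro hpl
        obtain ⟨c, -, hc⟩ := (Nat.dvd_prime_pow hq).mp (htdef ▸ hℓdvdt)
        rw [hc] at hpl
        have hpq := hp.dvd_of_dvd_pow hpl
        exact hqp ((Nat.prime_dvd_prime_iff_eq hp hq).mp hpq).symm
      have haff := AFF hp Abar ubar Mk ℓ r s₀ hMk0 hr_pos hstab hMkr hℓp hchar
      have e5 : nk (k+1) = m * (Mk * ℓ) := by rw [← hℓ, ← hMk]; ring
      rw [e5]
      exact Nat.mul_dvd_mul_left m haff
  -- stabilization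
  set Dnat := Finset.sup (Finset.range (t+1) ×ˢ (Finset.univ : Finset (Fin N)))
      (fun jc => ((H^[jc.1] P) jc.2 - P jc.2).natAbs) with hD
  set K := Dnat + 1 with hK
  have hnkK_le : nk K ≤ t := Nat.le_of_dvd ht0 (nk_dvd_t K)
  have hzero : ∀ c, (H^[nk K] P) c - P c = 0 := by
    intro c
    have hdvd := nkZ K c
    have habs : ((H^[nk K] P) c - P c).natAbs ≤ Dnat := by
      apply Finset.le_sup (f := fun jc : ℕ × Fin N => ((H^[jc.1] P) jc.2 - P jc.2).natAbs)
        (b := (nk K, c))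
      exact Finset.mem_product.mpr ⟨Finset.mem_range.mpr (by omega), Finset.mem_univ c⟩
    have hdvdn : p ^ K ∣ ((H^[nk K] P) c - P c).natAbs := by
      have e6 : ((p:ℤ))^K = (((p ^ K : ℕ)) : ℤ) := by push_cast; ring
      rw [e6] at hdvd
      have h7 := Int.natAbs_dvd_natAbs.mpr hdvd
      rwa [Int.natAbs_natCast] at h7
    rcases Nat.eq_zero_or_pos ((H^[nk K] P) c - P c).natAbs with h0 | hpos
    · exact Int.natAbs_eq_zero.mp h0
    · exfalso
      have h1 := Nat.le_of_dvd hpos hdvdn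
      have h2 : Dnat < p ^ K :=
        lt_of_lt_of_le (Nat.lt_two_pow_self (n := Dnat))
          (le_trans (Nat.pow_le_pow_right (by norm_num) (by omega))
            (Nat.pow_le_pow_left hp2 K))
      omega
  have hfix : H^[nk K] P = P := by
    funext c
    have := hzero c
    omega
  have ht_dvd : t ∣ nk K := hmin _ (nk_pos K) hfix
  have hnkK : nk K = t := Nat.dvd_antisymm (nk_dvd_t K) ht_dvd
  have hfinal : t ∣ m * r := hnkK ▸ main K (by omega)
  have hmr0 : 0 < m * r := Nat.mul_pos hm0 hr_pos
  calc t ≤ m * r := Nat.le_of_dvd hmr0 hfinal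
  _ ≤ p ^ N * (p ^ N - 1) := Nat.mul_le_mul hm_le hr_le

end Stmt14aux

/-- Let `P` be an integral periodic point of primitive period `n` of a
polynomial endomorphism of `𝔸^N`, and let `p` be a prime. Then for every prime `q ≠ p`,
`q ^ ord_q(n) ≤ p^N * (p^N - 1)`. -/
theorem stmt14 (N : ℕ) (hN : 1 ≤ N) (p : ℕ) (hp : p.Prime)
    (f : Fin N → MvPolynomial (Fin N) ℤ)
    (F : (Fin N → ℤ) → (Fin N → ℤ))
    (hF : ∀ x, F x = fun i => MvPolynomial.eval x (f i))
    (P : Fin N → ℤ)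
    (hP : ∃ k, 0 < k ∧ F^[k] P = P)
    (n : ℕ) (hn : n = Function.minimalPeriod F P) :
    ∀ q : ℕ, q.Prime → q ≠ p → q ^ (n.factorization q) ≤ p ^ N * (p ^ N - 1) := by
  intro q hq hqp
  obtain ⟨k0, hk0, hper⟩ := hP
  have hper' : Function.IsPeriodicPt F k0 P := hper
  have hn0 : 0 < n := hn ▸ hper'.minimalPeriod_pos hk0
  have htn : q ^ (n.factorization q) ∣ n := Nat.ordProj_dvd n q
  have ht0 : 0 < q ^ (n.factorization q) := pow_pos hq.pos _
  set s := n / q ^ (n.factorization q) with hs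
  have hst : s * q ^ (n.factorization q) = n := Nat.div_mul_cancel htn
  have hs0 : 0 < s := Nat.div_pos (Nat.le_of_dvd hn0 htn) ht0
  set H := F^[s] with hHd
  have hHpoly : ∀ x, H x = fun i => MvPolynomial.eval x (Stmt14aux.iterPolys f s i) :=
    fun x => Stmt14aux.iter_eval f F hF s x
  have hHt : H^[q ^ (n.factorization q)] P = P := by
    rw [hHd, ← Function.iterate_mul, hst]
    have hmp := Function.isPeriodicPt_minimalPeriod F P
    rw [← hn] at hmp
    exact hmp
  have hmin : ∀ j, 0 < j → H^[j] P = P → q ^ (n.factorization q) ∣ j := by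
    intro j hj hfix
    rw [hHd, ← Function.iterate_mul] at hfix
    have hper2 : Function.IsPeriodicPt F (s * j) P := hfix
    have hdvd := hper2.minimalPeriod_dvd
    rw [← hn, ← hst] at hdvd
    exact (mul_dvd_mul_iff_left hs0.ne').mp hdvd
  exact Stmt14aux.core hN hp hq hqp _ H hHpoly P hHt hmin
end
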